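/- arXiv:1911.13177 — 4 statements merged into one kernel-verified Lean document; each statement's English description precedes it below -/
import Mathlib

section
/- Let X = P^1 and let n < 0 or n ≥ k ≥ 0. Then the k-th jet bundle of L^n = O(n) satisfies J^k(O(n)) ≅ O(n-k) ⊗ C^{k+1} as a holomorphic vector bundle; i.e., J^k(O(n)) is isomorphic to a direct sum of k+1 copies of O(n-k). Moreover this isomorphism can be chosen SL(2,C)-equivariantly, with C^{k+1} = Sym^k(V) as SL(2,C)-module. -/
/-!
STATEMENT 10: Let X = P¹ and let n < 0 or n ≥ k ≥ 0.  Then the k-th jet bundle of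
L^n = O(n) satisfies J^k(O(n)) ≅ O(n-k) ⊗ ℂ^{k+1}, i.e. J^k(O(n)) is isomorphic to a direct
sum of k+1 copies of O(n-k).  (Moreover this isomorphism can be chosen SL(2,ℂ)-equivariantly,
with ℂ^{k+1} = Sym^k(V) as SL(2,ℂ)-module.)

Formalization notes (transition-matrix model): cover P¹ by the standard charts U₀
(coordinate z) and U₁ (w = 1/z).  A bundle is given by its transition matrix over
ℂ* ⊆ ℂ[z,z⁻¹], two such being equivalent iff they differ by holomorphic invertible gauges
over U₀ (entries in ℂ[z]) and U₁ (entries in ℂ[z⁻¹]).  O(a) has transition function zᵃ.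
A k-jet of a section s of O(n) at z₀ ∈ U₀ is recorded by its Taylor coefficients
(a₀, …, a_k) at z₀ in the chart-0 trivialization.  If s₀(z) = zⁿ·s₁(1/z) is the transition
rule for sections of O(n), the Taylor coefficients at z of s₀ and of s₁ (at 1/z) are related
by the lower-triangular matrix (computed from s₀(z+t) = (z+t)ⁿ s₁(1/(z+t))):
  A_{ij}(z) = (-1)^j · C(n-j, i-j) · z^{n-i-j}   (0 ≤ j ≤ i ≤ k),
where C(a, r) = a(a-1)⋯(a-r+1)/r! is the generalized binomial coefficient.  This matrix
`jetTransition n k` is the transition matrix of J^k(O(n)).  The statement: for n < 0 or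
n ≥ k, `jetTransition n k` is equivalent to the diagonal matrix z^{n-k}·1_{k+1}, the
transition matrix of O(n-k)^{⊕(k+1)}.  (The SL(2,ℂ)-equivariance refinement is not captured
by this transition-matrix model.)
-/

open LaurentPolynomial

/-- Generalized binomial coefficient `C(a, r) = a(a-1)⋯(a-r+1)/r!` as a complex number. -/
noncomputable def gbinom (a : ℤ) (r : ℕ) : ℂ :=
  (∏ t ∈ Finset.range r, ((a : ℂ) - (t : ℂ))) / (Nat.factorial r : ℂ)

/-- The transition matrix of the jet bundle `J^k(O(n))` on `P¹` in the two-chart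
description: `A_{ij}(z) = (-1)^j C(n-j, i-j) z^{n-i-j}` for `j ≤ i`, `0` otherwise. -/
noncomputable def jetTransition (n : ℤ) (k : ℕ) :
    Matrix (Fin (k + 1)) (Fin (k + 1)) (LaurentPolynomial ℂ) :=
  Matrix.of fun i j =>
    if j.val ≤ i.val then
      LaurentPolynomial.C ((-1 : ℂ) ^ j.val * gbinom (n - j.val) (i.val - j.val)) *
        T (n - i.val - j.val)
    else 0

/-- `f` is holomorphic on the chart `U₀`. -/
def IsPolyFun (f : LaurentPolynomial ℂ) : Prop := ∀ i : ℤ, i < 0 → f.coeff i = 0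

/-- `f` is holomorphic on the chart `U₁`. -/
def IsAntiPolyFun (f : LaurentPolynomial ℂ) : Prop := ∀ i : ℤ, 0 < i → f.coeff i = 0

/-- Holomorphic invertible gauge over `U₀`. -/
def IsPolyGauge {r : ℕ} (P : Matrix (Fin r) (Fin r) (LaurentPolynomial ℂ)) : Prop :=
  (∀ i j, IsPolyFun (P i j)) ∧
    ∃ P' : Matrix (Fin r) (Fin r) (LaurentPolynomial ℂ),
      (∀ i j, IsPolyFun (P' i j)) ∧ P * P' = 1 ∧ P' * P = 1

/-- Holomorphic invertible gauge over `U₁`. -/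
def IsAntiPolyGauge {r : ℕ} (Q : Matrix (Fin r) (Fin r) (LaurentPolynomial ℂ)) : Prop :=
  (∀ i j, IsAntiPolyFun (Q i j)) ∧
    ∃ Q' : Matrix (Fin r) (Fin r) (LaurentPolynomial ℂ),
      (∀ i j, IsAntiPolyFun (Q' i j)) ∧ Q * Q' = 1 ∧ Q' * Q = 1

/-- The transition matrices `A`, `B` define isomorphic holomorphic bundles on `P¹`. -/
def BundleEquiv {r : ℕ} (A B : Matrix (Fin r) (Fin r) (LaurentPolynomial ℂ)) : Prop :=
  ∃ P Q : Matrix (Fin r) (Fin r) (LaurentPolynomial ℂ),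
    IsPolyGauge P ∧ IsAntiPolyGauge Q ∧ B = P * A * Q

/-!
Writing `C(a, r)` for the generalized binomial coefficient, trinomial revision
`C(n, j) C(n - j, i - j) = C(n, i) C(i, j)` factors the transition matrix of `J^k(O(n))` as
`z^(n-k) D B E` with `D = diag C(n, i)`, `E = diag (-1)^j / C(n, j)` and
`B_ij = C(i, j) z^(k-i-j)`, a matrix that no longer depends on `n`. The constant diagonal factors
are invertible exactly when no `C(n, j)`, `j ≤ k`, vanishes, i.e. when `n < 0` or `n ≥ k`.

To trivialize `B`, multiply it on the left by the upper triangular polynomial gauge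
`U_ij = (-1)^(k-j) C(k-i, j-i) z^(j-i)`: the `(i, m)` entry of `U B` is `z^(k-i-m)` times the
`(k-i)`-th forward difference of `x ↦ C(x, m)` at `i`, which vanishes whenever `m < k - i`.
So `U B` involves only nonpositive powers of `z`, and its determinant is a nonzero constant:
it is an invertible gauge over `U₁`. The gauges `P = U D⁻¹` and `Q = (U B E)⁻¹` then carry
`z^(n-k) D B E` to `z^(n-k) · 1`.
-/

open Matrix AddMonoidAlgebra

namespace AddMonoidAlgebra

variable (R : Type*) [CommSemiring R] {G : Type*} [AddMonoid G]

def supportedSubalgebra (N : AddSubmonoid G) : Subalgebra R R[G] where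
  carrier := {x | ↑x.coeff.support ⊆ (N : Set G)}
  mul_mem' {x y} hx hy g hg := by
    classical
    obtain ⟨a, ha, b, hb, rfl⟩ := Finset.mem_add.1 (support_coeff_mul_subset x y hg)
    exact N.add_mem (hx ha) (hy hb)
  add_mem' {x y} hx hy g hg := by
    classical
    rcases Finset.mem_union.1 (Finsupp.support_add hg) with h | h
    exacts [hx h, hy h]
  algebraMap_mem' r := by
    simp only [coe_algebraMap, Algebra.algebraMap_self, RingHom.id_apply, Function.comp_apply]
    exact (Finset.coe_subset.2 Finsupp.support_single_subset).trans (by simp [N.zero_mem])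

variable {R}

lemma mem_supportedSubalgebra {N : AddSubmonoid G} {x : R[G]} :
    x ∈ supportedSubalgebra R N ↔ ∀ g ∉ N, x.coeff g = 0 := by
  simp [supportedSubalgebra, Set.subset_def, not_imp_comm]

end AddMonoidAlgebra

theorem Matrix.exists_inv_forall_mem_of_det_eq_algebraMap {n R A : Type*} [Fintype n]
    [DecidableEq n] [CommRing R] [CommRing A] [Algebra R A] (S : Subalgebra R A)
    {M : Matrix n n A} (hM : ∀ i j, M i j ∈ S) {e : R} (he : IsUnit e)
    (hdet : M.det = algebraMap R A e) :
    ∃ M' : Matrix n n A, (∀ i j, M' i j ∈ S) ∧ M * M' = 1 ∧ M' * M = 1 := by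
  let N : Matrix n n S := of fun i j => ⟨M i j, hM i j⟩
  have hN : S.val.mapMatrix N = M := rfl
  have hdetN : N.det = algebraMap R S e :=
    Subtype.val_injective <| (AlgHom.map_det S.val N).trans (hN ▸ hdet)
  have hunit : IsUnit N.det := hdetN ▸ he.map _
  refine ⟨S.val.mapMatrix N⁻¹, fun i j => (N⁻¹ i j).2, ?_, ?_⟩
  · rw [← hN, ← map_mul, N.mul_nonsing_inv hunit, map_one]
  · rw [← hN, ← map_mul, N.nonsing_inv_mul hunit, map_one]

namespace LaurentPolynomial

variable {R : Type*} [CommSemiring R]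

lemma T_sum {ι : Type*} (s : Finset ι) (b : ι → ℤ) :
    (T (∑ a ∈ s, b a) : R[T;T⁻¹]) = ∏ a ∈ s, T (b a) :=
  map_prod (AddMonoidAlgebra.of R ℤ) (fun a => Multiplicative.ofAdd (b a)) s

lemma C_mem_supportedSubalgebra (N : AddSubmonoid ℤ) (c : R) :
    C c ∈ supportedSubalgebra R N :=
  (C_eq_algebraMap c).symm ▸ Subalgebra.algebraMap_mem _ c

lemma C_mul_T_mem_supportedSubalgebra {N : AddSubmonoid ℤ} {e : ℤ} (he : e ∈ N) (c : R) :
    C c * T e ∈ supportedSubalgebra R N :=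
  (Finset.coe_subset.2 (support_C_mul_T c e)).trans (by simpa using he)

end LaurentPolynomial

lemma isPolyFun_iff_mem (f : ℂ[T;T⁻¹]) :
    IsPolyFun f ↔ f ∈ supportedSubalgebra ℂ (AddSubmonoid.nonneg ℤ) := by
  simp [mem_supportedSubalgebra, IsPolyFun]

lemma isAntiPolyFun_iff_mem (f : ℂ[T;T⁻¹]) :
    IsAntiPolyFun f ↔
      f ∈ supportedSubalgebra ℂ ((AddSubmonoid.nonneg ℤ).comap negAddMonoidHom) := by
  simp [mem_supportedSubalgebra, IsAntiPolyFun]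

lemma isPolyGauge_of_det_eq_C {r : ℕ} {P : Matrix (Fin r) (Fin r) ℂ[T;T⁻¹]}
    (hP : ∀ i j, IsPolyFun (P i j)) {e : ℂ} (he : e ≠ 0) (hdet : P.det = C e) :
    IsPolyGauge P := by
  simp only [isPolyFun_iff_mem] at hP
  obtain ⟨P', hP', hPP', hP'P⟩ := exists_inv_forall_mem_of_det_eq_algebraMap _ hP
    he.isUnit (hdet.trans (C_eq_algebraMap e))
  exact ⟨fun i j => (isPolyFun_iff_mem _).2 (hP i j), P',
    fun i j => (isPolyFun_iff_mem _).2 (hP' i j), hPP', hP'P⟩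

lemma isAntiPolyGauge_of_det_eq_C {r : ℕ} {Q : Matrix (Fin r) (Fin r) ℂ[T;T⁻¹]}
    (hQ : ∀ i j, IsAntiPolyFun (Q i j)) {e : ℂ} (he : e ≠ 0) (hdet : Q.det = C e) :
    IsAntiPolyGauge Q := by
  simp only [isAntiPolyFun_iff_mem] at hQ
  obtain ⟨Q', hQ', hQQ', hQ'Q⟩ := exists_inv_forall_mem_of_det_eq_algebraMap _ hQ
    he.isUnit (hdet.trans (C_eq_algebraMap e))
  exact ⟨fun i j => (isAntiPolyFun_iff_mem _).2 (hQ i j), Q',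
    fun i j => (isAntiPolyFun_iff_mem _).2 (hQ' i j), hQQ', hQ'Q⟩

lemma bundleEquiv_smul_diagonal {r : ℕ} (c : ℂ[T;T⁻¹])
    {A P : Matrix (Fin r) (Fin r) ℂ[T;T⁻¹]} (hP : IsPolyGauge P) (hPA : IsAntiPolyGauge (P * A)) :
    BundleEquiv (c • A) (diagonal fun _ => c) := by
  obtain ⟨hPA, Q, hQ, hPAQ, hQPA⟩ := hPA
  refine ⟨P, Q, hP, ⟨hQ, P * A, hPA, hQPA, hPAQ⟩, ?_⟩
  rw [← smul_one_eq_diagonal, ← hPAQ, Matrix.mul_smul, Matrix.smul_mul]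

lemma gbinom_eq_choose (a : ℤ) (r : ℕ) : gbinom a r = Ring.choose a r := by
  rw [← eq_intCast (Int.castRingHom ℂ), Ring.map_choose, eq_intCast, Ring.choose_eq_smul, gbinom,
    ← descPochhammer_eval_eq_prod_range, ← Polynomial.aeval_eq_smeval, smul_eq_mul,
    div_eq_inv_mul, ← descPochhammer_map (Int.castRingHom ℂ), Polynomial.eval_map,
    Polynomial.aeval_def, algebraMap_int_eq]

lemma gbinom_mul_gbinom_sub (n : ℤ) {i j : ℕ} (h : j ≤ i) :
    gbinom n j * gbinom (n - j) (i - j) = gbinom n i * i.choose j := by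
  have : Ring.choose n j * Ring.choose (n - j) (i - j) = Ring.choose n i * i.choose j := by
    rw [← Ring.choose_smul_choose n h, nsmul_eq_mul, mul_comm]
  simp only [gbinom_eq_choose]
  exact_mod_cast this

lemma gbinom_ne_zero {a : ℤ} {r : ℕ} (h : a < 0 ∨ (r : ℤ) ≤ a) : gbinom a r ≠ 0 := by
  refine div_ne_zero (Finset.prod_ne_zero_iff.2 fun t ht => ?_)
    (by exact_mod_cast r.factorial_ne_zero)
  have : a ≠ t := by rw [Finset.mem_range] at ht; omega
  exact sub_ne_zero.2 (by exact_mod_cast this)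

lemma fwdDiff_iter_choose_eq_zero {m l : ℕ} (h : m < l) (y : ℕ) :
    (fwdDiff 1)^[l] (fun x ↦ x.choose m : ℕ → ℤ) y = 0 := by
  obtain ⟨d, rfl⟩ := Nat.exists_eq_add_of_lt h
  have hm : (fwdDiff 1)^[m] (fun x ↦ x.choose m : ℕ → ℤ) = fun _ ↦ 1 := by
    simpa using fwdDiff_iter_choose 0 m
  rw [show m + d + 1 = d + 1 + m by ring, Function.iterate_add_apply, hm,
    Function.iterate_succ_apply, fwdDiff_const]
  exact congrFun (Function.iterate_fixed (fwdDiff_const 1 0) d) y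

noncomputable def binomialTransition (k : ℕ) : Matrix (Fin (k + 1)) (Fin (k + 1)) ℂ[T;T⁻¹] :=
  of fun i j => C ((i.val.choose j.val : ℕ) : ℂ) * T (k - i.val - j.val)

noncomputable def binomialGauge (k : ℕ) : Matrix (Fin (k + 1)) (Fin (k + 1)) ℂ[T;T⁻¹] :=
  of fun i j => if i ≤ j then
    C ((-1 : ℂ) ^ (k - j.val) * ((k - i.val).choose (j.val - i.val) : ℕ)) * T (j.val - i.val)
    else 0

lemma jetTransition_eq_smul (n : ℤ) (k : ℕ) (hn : ∀ j : Fin (k + 1), gbinom n j ≠ 0) :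
    jetTransition n k = (T (n - k) : ℂ[T;T⁻¹]) •
      (diagonal (fun i : Fin (k + 1) => C (gbinom n i)) * binomialTransition k *
        diagonal (fun j : Fin (k + 1) => C ((-1) ^ j.val / gbinom n j))) := by
  refine Matrix.ext fun i j => ?_
  simp only [jetTransition, binomialTransition, diagonal_mul, mul_diagonal, of_apply,
    Matrix.smul_apply, smul_eq_mul]
  split_ifs with hji
  · have hcoeff : (-1) ^ j.val * gbinom (n - j.val) (i.val - j.val)
        = gbinom n i * i.val.choose j.val * ((-1) ^ j.val / gbinom n j) := by
      rw [← gbinom_mul_gbinom_sub n hji]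
      field_simp [hn j]
    rw [hcoeff, show n - i.val - j.val = (n - k) + (k - i.val - j.val) by ring, T_add]
    simp only [map_mul]
    ring
  · simp [Nat.choose_eq_zero_of_lt (not_le.1 hji)]

lemma binomialGauge_mul_binomialTransition_apply (k : ℕ) (i m : Fin (k + 1)) :
    (binomialGauge k * binomialTransition k) i m =
      C (((fwdDiff 1)^[k - i.val] (fun x ↦ x.choose m.val : ℕ → ℤ) i.val : ℤ) : ℂ) *
        T (k - i.val - m.val) := by
  let g : ℕ → ℂ := fun j => if i.val ≤ j then
    (-1) ^ (k - j) * (k - i.val).choose (j - i.val) * j.choose m.val else 0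
  have hterm : ∀ j, binomialGauge k i j * binomialTransition k j m =
      C (g j) * T (k - i.val - m.val) := by
    intro j
    by_cases hij : i ≤ j
    · simp only [binomialGauge, binomialTransition, of_apply, g, if_pos hij,
        if_pos (Fin.le_iff_val_le_val.1 hij)]
      rw [mul_mul_mul_comm, ← map_mul, ← T_add]
      congr 2
      ring
    · simp only [binomialGauge, of_apply, g, if_neg hij,
        if_neg (mt Fin.le_iff_val_le_val.2 hij), zero_mul, map_zero]
  have hsplit : ∑ j ∈ Finset.range (k + 1), g j =
      ∑ s ∈ Finset.range (k - i.val + 1), g (i.val + s) := by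
    rw [Finset.range_eq_Ico, ← Finset.sum_Ico_consecutive g (Nat.zero_le i.val) i.isLt.le,
      Finset.sum_eq_zero fun j hj => if_neg (by rw [Finset.mem_Ico] at hj; omega), zero_add,
      Finset.sum_Ico_eq_sum_range, Nat.sub_add_comm (Nat.le_of_lt_succ i.isLt)]
  rw [Matrix.mul_apply, Finset.sum_congr rfl fun j _ => hterm j, ← Finset.sum_mul, ← map_sum,
    Fin.sum_univ_eq_sum_range g, hsplit, fwdDiff_iter_eq_sum_shift]
  congr 2
  push_cast
  refine Finset.sum_congr rfl fun s hs => ?_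
  simp [g, Nat.sub_sub]

lemma isAntiPolyFun_binomialGauge_mul_binomialTransition (k : ℕ) (i m : Fin (k + 1)) :
    IsAntiPolyFun ((binomialGauge k * binomialTransition k) i m) := by
  rw [isAntiPolyFun_iff_mem, binomialGauge_mul_binomialTransition_apply]
  by_cases him : k ≤ i.val + m.val
  · refine C_mul_T_mem_supportedSubalgebra ?_ _
    rw [AddSubmonoid.mem_comap, negAddMonoidHom_apply, AddSubmonoid.mem_nonneg]
    omega
  · rw [fwdDiff_iter_choose_eq_zero (by omega), Int.cast_zero, map_zero, zero_mul]
    exact zero_mem _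

lemma det_binomialGauge (k : ℕ) :
    (binomialGauge k).det = C (∏ i : Fin (k + 1), (-1) ^ (k - i.val)) := by
  rw [det_of_isUpperTriangular, map_prod]
  · refine Finset.prod_congr rfl fun i _ => ?_
    simp [binomialGauge]
  · intro i j hji
    simp [binomialGauge, not_le.2 (show j < i from hji)]

lemma det_binomialTransition (k : ℕ) : (binomialTransition k).det = 1 := by
  have hgauss : (∑ i ∈ Finset.range (k + 1), (i : ℤ)) * 2 = ((k : ℤ) + 1) * k := by
    have := Finset.sum_range_id_mul_two (k + 1)
    rw [Nat.add_sub_cancel] at this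
    rw [← Nat.cast_sum]
    exact_mod_cast this
  have hexp : ∑ i ∈ Finset.range (k + 1), ((k : ℤ) - i - i) = 0 := by
    simp only [Finset.sum_sub_distrib, Finset.sum_const, Finset.card_range, nsmul_eq_mul]
    push_cast
    linarith
  rw [det_of_isLowerTriangular]
  · simp only [binomialTransition, of_apply, Nat.choose_self, Nat.cast_one, map_one, one_mul]
    rw [← T_sum, Fin.sum_univ_eq_sum_range (fun i => (k : ℤ) - i - i), hexp, T_zero]
  · intro i j hij
    simp [binomialTransition, Nat.choose_eq_zero_of_lt (show i.val < j.val from hij)]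

lemma isPolyGauge_binomialGauge_mul_diagonal (k : ℕ) {d : Fin (k + 1) → ℂ} (hd : ∀ i, d i ≠ 0) :
    IsPolyGauge (binomialGauge k * diagonal fun i => C (d i)) := by
  refine isPolyGauge_of_det_eq_C (fun i j => ?_)
    (e := (∏ i : Fin (k + 1), (-1) ^ (k - i.val)) * ∏ i, d i) ?_ ?_
  · rw [mul_diagonal, isPolyFun_iff_mem]
    refine mul_mem ?_ (C_mem_supportedSubalgebra _ _)
    simp only [binomialGauge, of_apply]
    split_ifs
    · exact C_mul_T_mem_supportedSubalgebra (AddSubmonoid.mem_nonneg.2 (by omega)) _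
    · exact zero_mem _
  · exact mul_ne_zero (Finset.prod_ne_zero_iff.2 fun i _ => by simp)
      (Finset.prod_ne_zero_iff.2 fun i _ => hd i)
  · rw [det_mul, det_binomialGauge, det_diagonal, map_mul, map_prod, map_prod]

lemma isAntiPolyGauge_binomialGauge_mul_binomialTransition_mul_diagonal (k : ℕ)
    {e : Fin (k + 1) → ℂ} (he : ∀ i, e i ≠ 0) :
    IsAntiPolyGauge (binomialGauge k * binomialTransition k * diagonal fun i => C (e i)) := by
  refine isAntiPolyGauge_of_det_eq_C (fun i j => ?_)
    (e := (∏ i : Fin (k + 1), (-1) ^ (k - i.val)) * ∏ i, e i) ?_ ?_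
  · rw [mul_diagonal, isAntiPolyFun_iff_mem]
    exact mul_mem ((isAntiPolyFun_iff_mem _).1
      (isAntiPolyFun_binomialGauge_mul_binomialTransition k i j)) (C_mem_supportedSubalgebra _ _)
  · exact mul_ne_zero (Finset.prod_ne_zero_iff.2 fun i _ => by simp)
      (Finset.prod_ne_zero_iff.2 fun i _ => he i)
  · rw [det_mul, det_mul, det_binomialGauge, det_binomialTransition, det_diagonal, mul_one,
      map_mul, map_prod, map_prod]

theorem jet_of_On_splits (n : ℤ) (k : ℕ) (h : n < 0 ∨ (k : ℤ) ≤ n) :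
    BundleEquiv (jetTransition n k) (Matrix.diagonal fun _ : Fin (k + 1) => T (n - k)) := by
  have hn : ∀ j : Fin (k + 1), gbinom n j ≠ 0 :=
    fun j => gbinom_ne_zero (by have := j.isLt; omega)
  have hcancel : (diagonal fun i : Fin (k + 1) => C (gbinom n i)⁻¹) *
      diagonal (fun i : Fin (k + 1) => C (gbinom n i)) = 1 := by
    rw [diagonal_mul_diagonal, ← diagonal_one]
    exact congrArg diagonal (funext fun i => by rw [← map_mul, inv_mul_cancel₀ (hn i), map_one])
  rw [jetTransition_eq_smul n k hn]
  refine bundleEquiv_smul_diagonal _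
    (isPolyGauge_binomialGauge_mul_diagonal k fun i => inv_ne_zero (hn i)) ?_
  simp only [← Matrix.mul_assoc]
  rw [Matrix.mul_assoc (binomialGauge k), hcancel, Matrix.mul_one]
  exact isAntiPolyGauge_binomialGauge_mul_binomialTransition_mul_diagonal k
    fun j => div_ne_zero (by simp) (hn j)
end

section
/- Let X = P^1 and let k > n ≥ 0. Then J^k(O(n)) ≅ (O_X ⊗ Sym^n(V)) ⊕ (O(-(k+1)) ⊗ Sym^{k-n-1}(V)) as SL(V)-equivariant holomorphic vector bundles; in particular J^k(O(n)) is a direct sum of n+1 copies of O_X and k-n copies of O(-(k+1)). -/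
/-!
On `P¹` a bundle is its transition matrix up to gauges that are invertible over `ℂ[z]` on one
side and over `ℂ[z⁻¹]` on the other. For `j ≤ n < i` the entry `C(n-j, i-j)` of the jet
transition matrix vanishes, so for `k > n` that matrix is block diagonal.

The upper block `A` is the transition matrix of `J^n(O(n))`. With the Taylor-shift matrix
`T(x) = (C(b,a) x^(b-a))`, whose columns at `x = z` are the jets of `1, z, …, z^n`, and the index
reversal `J`, it satisfies `A · T(z⁻¹) = T(z) · J`, so `J^n(O(n))` is trivial. Entrywise this is
the alternating Vandermonde sum `∑ⱼ (-1)ʲ C(c,j) C(N-j, i-j) = C(N-c, i)`, the coefficient of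
`Xⁱ` in `(1+X)^(N-c) = ((1+X) - X)ᶜ (1+X)^(N-c)`.

The lower block is `±z^(-(k+1))` times the transpose of the transition matrix of
`J^(k-n-1)(O(k-n-1))` with `z ↦ z⁻¹` and indices reversed. That operation exchanges the two kinds
of gauge, so the lower block is equivalent to `z^(-(k+1))` times the identity.
-/

open LaurentPolynomial

open Matrix Finset
open scoped Polynomial
open Polynomial (X toLaurent)

theorem sum_neg_one_pow_mul_choose_mul_choose {c N : ℕ} (hc : c ≤ N) (i : ℕ) :
    ∑ j ∈ range (N + 1),
        (-1 : ℤ) ^ j * c.choose j * (if j ≤ i then ((N - j).choose (i - j) : ℤ) else 0) =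
      (N - c).choose i := by
  have hpoly : (X + 1 : ℤ[X]) ^ (N - c) = ∑ j ∈ range (c + 1),
      Polynomial.C ((-1) ^ j * (c.choose j : ℤ)) * (X ^ j * (X + 1) ^ (N - j)) := by
    calc (X + 1 : ℤ[X]) ^ (N - c) = (-X + (X + 1)) ^ c * (X + 1) ^ (N - c) := by simp
      _ = _ := by
        rw [add_pow, sum_mul]
        refine sum_congr rfl fun j hj => ?_
        rw [show N - j = (c - j) + (N - c) by have := mem_range.mp hj; omega, pow_add, neg_pow,
          Polynomial.C_mul, Polynomial.C_pow, Polynomial.C_neg, Polynomial.C_1,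
          Polynomial.C_eq_natCast]
        ring
  have hcoeff := congrArg (Polynomial.coeff · i) hpoly
  simp only [Polynomial.coeff_X_add_one_pow, Polynomial.finsetSum_coeff,
    Polynomial.coeff_C_mul, Polynomial.coeff_X_pow_mul'] at hcoeff
  rw [hcoeff, ← sum_range_add_sum_Ico _ (by omega : c + 1 ≤ N + 1),
    sum_eq_zero (s := Ico _ _) fun j hj => by
      rw [Nat.choose_eq_zero_of_lt (by have := (mem_Ico.mp hj).1; omega)]; simp]
  simp

lemma gbinom_natCast (m r : ℕ) : gbinom m r = m.choose r := by
  rw [gbinom, Int.cast_natCast, ← descPochhammer_eval_eq_prod_range,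
    descPochhammer_eval_eq_descFactorial, Nat.descFactorial_eq_factorial_mul_choose, Nat.cast_mul,
    mul_div_cancel_left₀ _ (Nat.cast_ne_zero.mpr r.factorial_ne_zero)]

lemma gbinom_neg (u r : ℕ) : gbinom (-((u : ℤ) + 1)) r = (-1) ^ r * ((u + r).choose r : ℂ) := by
  have hprod : ∏ t ∈ range r, (((-((u : ℤ) + 1) : ℤ) : ℂ) - t) =
      (-1) ^ r * ((u + 1).ascFactorial r : ℂ) := by
    calc _ = ∏ t ∈ range r, ((-1) * ((u + 1 + t : ℕ) : ℂ)) :=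
          prod_congr rfl fun t _ => by push_cast; ring
      _ = _ := by
        rw [prod_mul_distrib, prod_const, card_range, Nat.ascFactorial_eq_prod_range,
          Nat.cast_prod]
  have hfact : (r.factorial : ℂ) ≠ 0 := Nat.cast_ne_zero.mpr r.factorial_ne_zero
  rw [gbinom, hprod, Nat.ascFactorial_eq_factorial_mul_choose, Nat.cast_mul]
  field_simp

section Matrices

variable {R S : Type*} [CommRing R] [CommRing S]

/-- The matrix of `p(t) ↦ p(t + x)` on polynomials of degree `< N`. -/
def taylorMatrix (N : ℕ) (x : R) : Matrix (Fin N) (Fin N) R :=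
  of fun a b => ((b : ℕ).choose a : R) * x ^ ((b : ℕ) - a)

@[simp] lemma taylorMatrix_apply (N : ℕ) (x : R) (a b : Fin N) :
    taylorMatrix N x a b = ((b : ℕ).choose a : R) * x ^ ((b : ℕ) - a) := rfl

lemma RingHom.mapMatrix_taylorMatrix (f : R →+* S) (N : ℕ) (x : R) :
    f.mapMatrix (taylorMatrix N x) = taylorMatrix N (f x) := by
  ext a b; simp

lemma det_taylorMatrix (N : ℕ) (x : R) : (taylorMatrix N x).det = 1 := by
  rw [det_of_isUpperTriangular]
  · simp
  · intro a b hba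
    rw [taylorMatrix_apply, Nat.choose_eq_zero_of_lt (show (b : ℕ) < a from hba), Nat.cast_zero,
      zero_mul]

lemma isUnit_taylorMatrix (N : ℕ) (x : R) : IsUnit (taylorMatrix N x) := by
  simp [isUnit_iff_isUnit_det, det_taylorMatrix]

lemma isUnit_permMatrix {ι : Type*} [Fintype ι] [DecidableEq ι] (σ : Equiv.Perm ι) :
    IsUnit (σ.permMatrix R) := by
  rw [isUnit_iff_isUnit_det, det_permutation]
  exact (Equiv.Perm.sign σ).isUnit.map (Int.castRingHom R)

lemma reindex_finSumFinEquiv_diagonal_ite {α : Type*} [Semiring α] (n m : ℕ) (t : α) :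
    reindex (finSumFinEquiv (m := n + 1) (n := m + 1)).symm
        (finSumFinEquiv (m := n + 1) (n := m + 1)).symm
        (diagonal fun i : Fin (n + 1 + m + 1) => if (i : ℕ) ≤ n then 1 else t) =
      fromBlocks 1 0 0 (t • 1) := by
  rw [reindex_apply, Equiv.symm_symm, submatrix_diagonal_equiv, ← diagonal_one,
    smul_one_eq_diagonal, fromBlocks_diagonal]
  congr 1
  ext (i | a) : 1
  · simp [Nat.lt_succ_iff.mp i.is_lt]
  · simp only [Function.comp_apply, finSumFinEquiv_apply_right, Fin.val_natAdd, Sum.elim_inr]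
    exact if_neg (by omega)

end Matrices

namespace LaurentPolynomial

variable {R : Type*} [CommRing R]

/-- `p ↦ p(z⁻¹)`. -/
noncomputable def toLaurentInv : R[X] →+* R[T;T⁻¹] :=
  (invert : R[T;T⁻¹] ≃ₐ[R] R[T;T⁻¹]).toRingHom.comp toLaurent

@[simp] lemma toLaurentInv_X : toLaurentInv (X : R[X]) = T (-1) := by
  simp [toLaurentInv]

@[simp] lemma invert_comp_toLaurentInv : ⇑invert ∘ ⇑(toLaurentInv (R := R)) = toLaurent :=
  funext fun _ => involutive_invert _

@[simp] lemma invert_comp_toLaurent : ⇑invert ∘ ⇑(toLaurent (R := R)) = toLaurentInv := rfl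

variable {ι κ : Type*} [Fintype ι] [DecidableEq ι] [Fintype κ] [DecidableEq κ]

/-- `BundleEquiv` over any index type and coefficient ring, with the gauges given as invertible
matrices of polynomials in `z` and in `z⁻¹`. -/
def GaugeEquiv (A B : Matrix ι ι R[T;T⁻¹]) : Prop :=
  ∃ P Q : Matrix ι ι R[X], IsUnit P ∧ IsUnit Q ∧
    B = toLaurent.mapMatrix P * A * toLaurentInv.mapMatrix Q

namespace GaugeEquiv

variable {A B D : Matrix ι ι R[T;T⁻¹]}

theorem of_eq {P Q : Matrix ι ι R[X]} (hP : IsUnit P) (hQ : IsUnit Q)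
    (h : B = toLaurent.mapMatrix P * A * toLaurentInv.mapMatrix Q) : GaugeEquiv A B :=
  ⟨P, Q, hP, hQ, h⟩

@[trans] theorem trans (hAB : GaugeEquiv A B) (hBD : GaugeEquiv B D) : GaugeEquiv A D := by
  obtain ⟨P, Q, hP, hQ, rfl⟩ := hAB
  obtain ⟨P', Q', hP', hQ', rfl⟩ := hBD
  exact of_eq (hP'.mul hP) (hQ.mul hQ') (by simp only [map_mul, Matrix.mul_assoc])

@[symm] theorem symm (h : GaugeEquiv A B) : GaugeEquiv B A := by
  obtain ⟨P, Q, ⟨P, rfl⟩, ⟨Q, rfl⟩, rfl⟩ := h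
  refine of_eq (P⁻¹).isUnit (Q⁻¹).isUnit ?_
  simp only [← Matrix.mul_assoc, ← map_mul, Units.inv_mul, map_one, Matrix.one_mul]
  simp only [Matrix.mul_assoc, ← map_mul, Units.mul_inv, map_one, Matrix.mul_one]

theorem one_of_mul_eq {P Q : Matrix ι ι R[X]} (hP : IsUnit P) (hQ : IsUnit Q)
    (h : A * toLaurentInv.mapMatrix Q = toLaurent.mapMatrix P) : GaugeEquiv A 1 := by
  obtain ⟨Q, rfl⟩ := hQ
  refine (of_eq hP (Q⁻¹).isUnit ?_).symm
  rw [Matrix.mul_one, ← h, Matrix.mul_assoc, ← map_mul, Units.mul_inv, map_one, Matrix.mul_one]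

theorem C_smul (A : Matrix ι ι R[T;T⁻¹]) {u : R} (hu : IsUnit u) : GaugeEquiv A (C u • A) :=
  of_eq ((hu.map Polynomial.C).map (scalar ι)) isUnit_one (by simp [smul_eq_diagonal_mul])

theorem smul (s : R[T;T⁻¹]) (h : GaugeEquiv A B) : GaugeEquiv (s • A) (s • B) := by
  obtain ⟨P, Q, hP, hQ, rfl⟩ := h
  exact of_eq hP hQ (by rw [Matrix.mul_smul, Matrix.smul_mul])

theorem reindex (e : ι ≃ κ) (h : GaugeEquiv A B) :
    GaugeEquiv (Matrix.reindex e e A) (Matrix.reindex e e B) := by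
  obtain ⟨P, Q, hP, hQ, rfl⟩ := h
  refine of_eq (hP.map (reindexAlgEquiv R[X] R[X] e)) (hQ.map (reindexAlgEquiv R[X] R[X] e)) ?_
  simp only [coe_reindexAlgEquiv, reindex_apply, RingHom.mapMatrix_apply]
  rw [← submatrix_map, ← submatrix_map, submatrix_mul_equiv, submatrix_mul_equiv]

theorem fromBlocks {A₁ B₁ : Matrix ι ι R[T;T⁻¹]} {A₂ B₂ : Matrix κ κ R[T;T⁻¹]}
    (h₁ : GaugeEquiv A₁ B₁) (h₂ : GaugeEquiv A₂ B₂) :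
    GaugeEquiv (Matrix.fromBlocks A₁ 0 0 A₂) (Matrix.fromBlocks B₁ 0 0 B₂) := by
  obtain ⟨P₁, Q₁, hP₁, hQ₁, rfl⟩ := h₁
  obtain ⟨P₂, Q₂, hP₂, hQ₂, rfl⟩ := h₂
  refine of_eq (P := Matrix.fromBlocks P₁ 0 0 P₂) (Q := Matrix.fromBlocks Q₁ 0 0 Q₂)
    (isUnit_fromBlocks_zero₂₁.mpr ⟨hP₁, hP₂⟩) (isUnit_fromBlocks_zero₂₁.mpr ⟨hQ₁, hQ₂⟩) ?_
  simp [fromBlocks_map, fromBlocks_multiply]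

/-- Passing to the dual bundle and swapping the two charts exchanges the two kinds of gauge. -/
theorem dual (h : GaugeEquiv A B) : GaugeEquiv (A.map invert)ᵀ (B.map invert)ᵀ := by
  obtain ⟨P, Q, hP, hQ, rfl⟩ := h
  refine of_eq (P := Qᵀ) (Q := Pᵀ) ((isUnit_transpose _).mpr hQ) ((isUnit_transpose _).mpr hP) ?_
  simp [Matrix.map_mul, transpose_mul, Matrix.mul_assoc, transpose_map]

end GaugeEquiv

lemma isPolyFun_toLaurent (p : ℂ[X]) : IsPolyFun (toLaurent p) := by
  intro i hi
  refine Finsupp.notMem_support_iff.mp fun hmem => ?_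
  rw [support_coeff_toLaurent, mem_map] at hmem
  obtain ⟨d, -, rfl⟩ := hmem
  exact absurd hi (by simp)

lemma isAntiPolyFun_toLaurentInv (p : ℂ[X]) : IsAntiPolyFun (toLaurentInv p) := fun i hi =>
  (invert_apply (toLaurent p) i).trans (isPolyFun_toLaurent p _ (neg_neg_of_pos hi))

lemma isPolyGauge_mapMatrix_toLaurent {r : ℕ} {P : Matrix (Fin r) (Fin r) ℂ[X]} (hP : IsUnit P) :
    IsPolyGauge (toLaurent.mapMatrix P) := by
  obtain ⟨u, rfl⟩ := hP
  exact ⟨fun _ _ => isPolyFun_toLaurent _, toLaurent.mapMatrix ↑u⁻¹,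
    fun _ _ => isPolyFun_toLaurent _, by rw [← map_mul, u.mul_inv, map_one],
    by rw [← map_mul, u.inv_mul, map_one]⟩

lemma isAntiPolyGauge_mapMatrix_toLaurentInv {r : ℕ} {Q : Matrix (Fin r) (Fin r) ℂ[X]}
    (hQ : IsUnit Q) : IsAntiPolyGauge (toLaurentInv.mapMatrix Q) := by
  obtain ⟨u, rfl⟩ := hQ
  exact ⟨fun _ _ => isAntiPolyFun_toLaurentInv _, toLaurentInv.mapMatrix ↑u⁻¹,
    fun _ _ => isAntiPolyFun_toLaurentInv _, by rw [← map_mul, u.mul_inv, map_one],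
    by rw [← map_mul, u.inv_mul, map_one]⟩

theorem GaugeEquiv.bundleEquiv {r : ℕ} {A B : Matrix (Fin r) (Fin r) ℂ[T;T⁻¹]}
    (h : GaugeEquiv A B) : BundleEquiv A B := by
  obtain ⟨P, Q, hP, hQ, rfl⟩ := h
  exact ⟨_, _, isPolyGauge_mapMatrix_toLaurent hP, isAntiPolyGauge_mapMatrix_toLaurentInv hQ, rfl⟩

end LaurentPolynomial

lemma jetTransition_self_mul_taylorMatrix (N : ℕ) :
    jetTransition N N * toLaurentInv.mapMatrix (taylorMatrix (N + 1) X) =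
      toLaurent.mapMatrix (taylorMatrix (N + 1) X * Fin.revPerm.permMatrix ℂ[X]) := by
  refine Matrix.ext fun i c => ?_
  have hc : (c : ℕ) ≤ N := Nat.lt_succ_iff.mp c.is_lt
  set coef : ℕ → ℂ := fun j =>
    (((-1 : ℤ) ^ j * (c : ℕ).choose j *
      (if j ≤ i then (((N - j).choose (i - j) : ℕ) : ℤ) else 0) : ℤ) : ℂ) with hcoef
  have hterm (j : Fin (N + 1)) :
      jetTransition N N i j * taylorMatrix (N + 1) (T (-1)) j c = C (coef j) * T (N - i - c) := by
    rw [taylorMatrix_apply, T_pow]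
    simp only [hcoef]
    by_cases hjc : (j : ℕ) ≤ c
    · simp only [jetTransition, of_apply]
      split_ifs with hji
      · have hjN : (j : ℕ) ≤ N := Nat.lt_succ_iff.mp j.is_lt
        rw [show (N : ℤ) - (j : ℕ) = ((N - j : ℕ) : ℤ) by omega, gbinom_natCast, Nat.cast_sub hjc,
          ← map_natCast (C : ℂ →+* ℂ[T;T⁻¹]),
          show (N : ℤ) - i - c = (N - i - j) + (c - j) * -1 by ring, T_add]
        push_cast
        simp only [map_mul]
        ring
      · simp
    · rw [Nat.choose_eq_zero_of_lt (not_le.mp hjc)]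
      simp
  rw [RingHom.mapMatrix_taylorMatrix, toLaurentInv_X, mul_apply, Fintype.sum_congr _ _ hterm,
    ← sum_mul, ← map_sum, Fin.sum_univ_eq_sum_range coef]
  simp only [hcoef]
  rw [← Int.cast_sum, sum_neg_one_pow_mul_choose_mul_choose hc, RingHom.mapMatrix_apply,
    map_apply, Equiv.Perm.permMatrix, PEquiv.mul_toMatrix_toPEquiv, submatrix_apply,
    taylorMatrix_apply, map_mul, map_natCast, Polynomial.toLaurent_X_pow,
    ← map_natCast (C : ℂ →+* ℂ[T;T⁻¹])]
  simp only [Fin.revPerm_symm, Fin.revPerm_apply, Fin.val_rev, id, Int.cast_natCast]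
  rw [show N + 1 - (c + 1) = N - c by omega]
  by_cases hi : (i : ℕ) ≤ N - c
  · rw [show ((N - c - i : ℕ) : ℤ) = N - i - c by omega]
  · rw [Nat.choose_eq_zero_of_lt (not_le.mp hi)]
    simp

theorem gaugeEquiv_jetTransition_self_one (N : ℕ) : GaugeEquiv (jetTransition N N) 1 :=
  .one_of_mul_eq ((isUnit_taylorMatrix _ _).mul (isUnit_permMatrix _)) (isUnit_taylorMatrix _ _)
    (jetTransition_self_mul_taylorMatrix N)

theorem gaugeEquiv_smul_dual_jetTransition_self (N : ℕ) (s : ℂ[T;T⁻¹]) {u : ℂ} (hu : IsUnit u) :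
    GaugeEquiv (s • C u • ((jetTransition N N).map invert)ᵀ.submatrix Fin.rev Fin.rev)
      (s • 1) := by
  refine .smul s ((GaugeEquiv.C_smul _ hu).symm.trans ?_)
  have h := (gaugeEquiv_jetTransition_self_one N).dual.reindex Fin.revPerm
  rw [reindex_apply, reindex_apply, Matrix.map_one _ (map_zero _) (map_one _), transpose_one,
    submatrix_one_equiv] at h
  exact h

lemma jetTransition_natAdd_natAdd (n m : ℕ) (a b : Fin (m + 1)) :
    jetTransition n (n + 1 + m) (Fin.natAdd (n + 1) a) (Fin.natAdd (n + 1) b) =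
      T (-((n + 1 + m : ℕ) + 1 : ℤ)) *
        (C ((-1) ^ (n + 1 + m)) * invert (jetTransition m m (Fin.rev b) (Fin.rev a))) := by
  simp only [jetTransition, of_apply, Fin.val_natAdd, Fin.val_rev]
  by_cases hba : (b : ℕ) ≤ a
  · rw [if_pos (by omega), if_pos (by omega)]
    have hsign : (-1 : ℂ) ^ (n + 1 + b) * (-1) ^ (a - b : ℕ) =
        (-1) ^ (n + 1 + m) * (-1) ^ (m - a : ℕ) := by
      rw [← pow_add, ← pow_add, neg_one_pow_eq_pow_mod_two, neg_one_pow_eq_pow_mod_two (n := _ + _)]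
      congr 1
      omega
    rw [show (n : ℤ) - ((n + 1 + b : ℕ) : ℤ) = -((b : ℕ) + 1 : ℤ) by push_cast; ring,
      show n + 1 + a - (n + 1 + b) = a - b by omega, gbinom_neg, show b + (a - b : ℕ) = a by omega,
      show (m : ℤ) - ((m + 1 - (a + 1) : ℕ) : ℤ) = ((a : ℕ) : ℤ) by omega,
      show m + 1 - (b + 1) - (m + 1 - (a + 1)) = a - b by omega, gbinom_natCast,
      show m + 1 - (a + 1) = m - a by omega,
      show (n : ℤ) - ((n + 1 + a : ℕ) : ℤ) - ((n + 1 + b : ℕ) : ℤ) =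
        -((n + 1 + m : ℕ) + 1 : ℤ) + -((m : ℤ) - ((m + 1 - (b + 1) : ℕ) : ℤ) - ((m - a : ℕ) : ℤ))
        by push_cast; omega,
      T_add]
    have hC := congrArg C hsign
    simp only [map_mul, invert_C, invert_T] at hC ⊢
    linear_combination (C ((a : ℕ).choose (a - b) : ℂ) * T (-((n + 1 + m : ℕ) + 1 : ℤ)) *
      T (-((m : ℤ) - ((m + 1 - (b + 1) : ℕ) : ℤ) - ((m - a : ℕ) : ℤ)))) * hC
  · rw [if_neg (by omega), if_neg (by omega), map_zero, mul_zero, mul_zero]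

lemma reindex_finSumFinEquiv_jetTransition (n m : ℕ) :
    reindex (finSumFinEquiv (m := n + 1) (n := m + 1)).symm
        (finSumFinEquiv (m := n + 1) (n := m + 1)).symm (jetTransition n (n + 1 + m)) =
      fromBlocks (jetTransition n n) 0 0
        ((T (-((n + 1 + m : ℕ) + 1 : ℤ)) : ℂ[T;T⁻¹]) • C ((-1 : ℂ) ^ (n + 1 + m)) •
          ((jetTransition m m).map invert)ᵀ.submatrix Fin.rev Fin.rev) := by
  refine Matrix.ext fun i j => ?_
  rcases i with i | a <;> rcases j with j | b
  · rfl
  · simp only [reindex_apply, submatrix_apply, Equiv.symm_symm, finSumFinEquiv_apply_left,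
      finSumFinEquiv_apply_right, fromBlocks_apply₁₂, Matrix.zero_apply, jetTransition, of_apply,
      Fin.val_castAdd, Fin.val_natAdd]
    rw [if_neg (by omega)]
  · have hj : (j : ℕ) ≤ n := Nat.lt_succ_iff.mp j.is_lt
    simp only [reindex_apply, submatrix_apply, Equiv.symm_symm, finSumFinEquiv_apply_left,
      finSumFinEquiv_apply_right, fromBlocks_apply₂₁, Matrix.zero_apply, jetTransition, of_apply,
      Fin.val_castAdd, Fin.val_natAdd]
    rw [if_pos (by omega), show (n : ℤ) - (j : ℕ) = ((n - j : ℕ) : ℤ) by omega, gbinom_natCast,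
      Nat.choose_eq_zero_of_lt (by omega)]
    simp
  · simpa using jetTransition_natAdd_natAdd n m a b

theorem jet_of_On_splits_small_twist (n k : ℕ) (h : n < k) :
    BundleEquiv (jetTransition n k)
      (Matrix.diagonal fun i : Fin (k + 1) =>
        if i.val ≤ n then (1 : LaurentPolynomial ℂ) else T (-(k + 1 : ℤ))) := by
  obtain ⟨m, rfl⟩ : ∃ m, k = n + 1 + m := ⟨k - (n + 1), by omega⟩
  have hblocks := (gaugeEquiv_jetTransition_self_one n).fromBlocks
    (gaugeEquiv_smul_dual_jetTransition_self m (T (-((n + 1 + m : ℕ) + 1 : ℤ)))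
      ((isUnit_one.neg).pow (n + 1 + m)))
  rw [← reindex_finSumFinEquiv_jetTransition, ← reindex_finSumFinEquiv_diagonal_ite] at hblocks
  simpa [Function.comp_assoc] using (hblocks.reindex finSumFinEquiv).bundleEquiv
end

section
/- For X = P^1 and integers n ≥ k ≥ 0, there is a short exact sequence of holomorphic vector bundles 0 → O(-(k+1)) ⊗ Sym^{n-k-1}(V) → O_X ⊗ Sym^n(V) → J^k(O(n)) → 0, where the first map is the (k+1)-fold iteration of the multiplication map induced by the tautological inclusion of the sub-line-bundle of X × V; consequently J^k(O(n)) has rank k+1 and degree (k+1)(n-k). -/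
/-!
STATEMENT 16: For X = P¹ and integers n ≥ k ≥ 0, there is a short exact sequence of
holomorphic vector bundles
  0 → O(-(k+1)) ⊗ Sym^{n-k-1}(V) → O_X ⊗ Sym^n(V) → J^k(O(n)) → 0,
where the first map is the (k+1)-fold iteration of the multiplication map induced by the
tautological inclusion of the sub-line-bundle of X × V; consequently J^k(O(n)) has rank k+1
and degree (k+1)(n-k).

Formalization notes (two-chart model): in the affine chart z on U₀ with the standard
trivialization, the trivial bundle O_X ⊗ Sym^n(V) has fiber H⁰(O(n)) = {polynomials of
degree ≤ n} with monomial basis (t^α)_{0≤α≤n}; the fiber of J^k(O(n)) at z is ℂ^{k+1}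
(Taylor coefficients of order ≤ k at z); and O(-(k+1)) ⊗ Sym^{n-k-1}(V) has fiber ℂ^{n-k}
with basis (t^β)_{0≤β≤n-k-1}.  The surjection is the k-jet evaluation with matrix
  (G₀)_{iα}(z) = C(α,i)·z^{α-i}  (Taylor coefficient i of t^α at t = z),
and the tautological multiplication map (multiplication by the (k+1)-st power of the local
equation (t - z) of the point z, i.e. of the tautological sub-line bundle) has matrix
  (F₀)_{αβ}(z) = C(k+1, α-β)·(-z)^{k+1-(α-β)}  (coefficient of t^α in (t-z)^{k+1} t^β).
The theorem asserts:
(1) fiberwise exactness at every z ∈ ℂ: F₀(z) injective, G₀(z) surjective,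
    ker G₀(z) = range F₀(z)  (and by the chart-1 regularity (2),(3) this holds on all of P¹);
(2),(3) both maps are morphisms of bundles, i.e. in the chart at ∞ they are again
    holomorphic: G₁ := (jet transition)⁻¹·G₀ has entries in ℂ[z⁻¹], and
    F₁ := F₀·z^{-(k+1)} has entries in ℂ[z⁻¹] (the transition matrix of J^k(O(n)) is
    `jetTransition n k`, cf. STATEMENT 10; the trivial bundle has transition 1 and
    O(-(k+1))^{⊕(n-k)} has transition z^{-(k+1)}·1);
(4) the degree count: det(jetTransition n k) = c·z^{(k+1)(n-k)} with c ≠ 0, i.e. J^k(O(n))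
    has degree (k+1)(n-k); its rank is k+1 by construction (the matrix is (k+1)×(k+1)).
-/

open LaurentPolynomial Polynomial

/-- Chart-0 matrix of the k-jet evaluation `O_X ⊗ Sym^n(V) → J^k(O(n))`. -/
noncomputable def G0 (n k : ℕ) : Matrix (Fin (k + 1)) (Fin (n + 1)) (Polynomial ℂ) :=
  Matrix.of fun i α => Polynomial.C (α.val.choose i.val : ℂ) * X ^ (α.val - i.val)

/-- Chart-0 matrix of the tautological multiplication map
`O(-(k+1)) ⊗ Sym^{n-k-1}(V) → O_X ⊗ Sym^n(V)` (multiplication by the (k+1)-st power of the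
local equation of the tautological sub-line bundle). -/
noncomputable def F0 (n k : ℕ) : Matrix (Fin (n + 1)) (Fin (n - k)) (Polynomial ℂ) :=
  Matrix.of fun α β =>
    if β.val ≤ α.val ∧ α.val ≤ β.val + k + 1 then
      Polynomial.C ((k + 1).choose (α.val - β.val) : ℂ) * (-X) ^ (k + 1 - (α.val - β.val))
    else 0

/-!
Identify the fibre of `O_X ⊗ Sym^n(V)` over the chart `z` with polynomials of degree `≤ n`
(`Polynomial.ofFn`). Then `G₀(z)` reads off the first `k + 1` coefficients of `taylor z p`,
and `F₀(z)` is multiplication by `(t - z)^(k+1)`. The Taylor coefficients of order `≤ k` vanish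
exactly when `(t - z)^(k+1)` divides `p`, which is exactness in the middle; injectivity is
cancellation in `ℂ[t]` and surjectivity is Taylor expansion at `z` read backwards.

In the chart at infinity, `jetTransition · G₁ = G₀` comes down to the identity
`∑ⱼ (-1)^j C(N-j, i-j) C(N-a, j) = C(a, i)`: compare coefficients in
`(X + 1)^a = (X + 1)^a ((X + 1) - X)^(N-a)`. The transition matrix is lower triangular with
monomial diagonal, which gives its determinant.
-/

namespace Polynomial

section Semiring

variable {R : Type*} [Semiring R]

@[simp]
theorem toFn_apply (n : ℕ) (p : R[X]) (i : Fin n) : toFn n p i = p.coeff i := rfl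

theorem ofFn_toFn_of_degree_lt [DecidableEq R] {n : ℕ} {p : R[X]} (h : p.degree < n) :
    ofFn n (toFn n p) = p := by
  ext i
  by_cases hi : i < n
  · simp [hi]
  · rw [ofFn_coeff_eq_zero_of_ge _ (not_lt.mp hi),
      coeff_eq_zero_of_degree_lt (h.trans_le (by exact_mod_cast not_lt.mp hi))]

end Semiring

section CommRing

variable {R : Type*} [CommRing R]

theorem toFn_taylor_eq_zero_iff (z : R) (m : ℕ) (p : R[X]) :
    toFn m (taylor z p) = 0 ↔ (X - C z) ^ m ∣ p := by
  have hX : taylorEquiv z ((X - C z) ^ m) = X ^ m := by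
    change taylor z _ = _
    rw [taylor_pow, map_sub, taylor_X, taylor_C, add_sub_cancel_right]
  rw [← map_dvd_iff (taylorEquiv z), hX, X_pow_dvd_iff, funext_iff]
  exact ⟨fun h d hd => h ⟨d, hd⟩, fun h d => h d d.isLt⟩

variable [DecidableEq R]

theorem surjective_toFn_taylor_ofFn (z : R) {N k : ℕ} (hk : k < N) :
    Function.Surjective fun w : Fin N → R => toFn (k + 1) (taylor z (ofFn N w)) := by
  intro y
  refine ⟨toFn N (taylor (-z) (ofFn (k + 1) y)), ?_⟩
  have hdeg : (taylor (-z) (ofFn (k + 1) y)).degree < N := by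
    rw [degree_taylor]
    exact (ofFn_degree_lt y).trans_le (by exact_mod_cast hk)
  dsimp only
  rw [ofFn_toFn_of_degree_lt hdeg, taylor_taylor, add_neg_cancel, taylor_zero,
    toFn_comp_ofFn_eq_id]

variable [IsDomain R]

theorem degree_X_sub_C_pow_mul_ofFn_lt (z : R) (m k : ℕ) (v : Fin m → R) :
    ((X - C z) ^ (k + 1) * ofFn m v).degree < ((m + (k + 1) : ℕ) : WithBot ℕ) := by
  rw [degree_mul, degree_pow, degree_X_sub_C, nsmul_one, add_comm, Nat.cast_add]
  exact WithBot.add_lt_add_right (by simp) (ofFn_degree_lt v)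

theorem injective_toFn_X_sub_C_pow_mul_ofFn (z : R) {N m k : ℕ} (hN : m + (k + 1) ≤ N) :
    Function.Injective fun v : Fin m → R => toFn N ((X - C z) ^ (k + 1) * ofFn m v) := by
  have hdeg (v : Fin m → R) : ((X - C z) ^ (k + 1) * ofFn m v).degree < (N : WithBot ℕ) :=
    (degree_X_sub_C_pow_mul_ofFn_lt z m k v).trans_le (by exact_mod_cast hN)
  intro v v' h
  have h' := congrArg (ofFn N) h
  dsimp only at h'
  rw [ofFn_toFn_of_degree_lt (hdeg v), ofFn_toFn_of_degree_lt (hdeg v')] at h'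
  exact injective_ofFn m (mul_left_cancel₀ (pow_ne_zero _ (X_sub_C_ne_zero z)) h')

theorem setOf_toFn_taylor_ofFn_eq_zero_eq_range (z : R) {N m k : ℕ} (hN : m + (k + 1) = N) :
    {w : Fin N → R | toFn (k + 1) (taylor z (ofFn N w)) = 0} =
      Set.range fun v : Fin m → R => toFn N ((X - C z) ^ (k + 1) * ofFn m v) := by
  ext w
  simp only [Set.mem_ofPred_eq, Set.mem_range, toFn_taylor_eq_zero_iff]
  constructor
  · rintro ⟨q, hq⟩
    have hq_deg : q.degree < m := by
      have h := ofFn_degree_lt w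
      rw [hq, ← hN, degree_mul, degree_pow, degree_X_sub_C, nsmul_one, Nat.cast_add m,
        add_comm (m : WithBot ℕ)] at h
      exact (WithBot.add_lt_add_iff_left (WithBot.natCast_ne_bot _)).mp h
    refine ⟨toFn m q, ?_⟩
    rw [ofFn_toFn_of_degree_lt hq_deg, ← hq, toFn_comp_ofFn_eq_id]
  · rintro ⟨v, rfl⟩
    rw [ofFn_toFn_of_degree_lt ((degree_X_sub_C_pow_mul_ofFn_lt z m k v).trans_le
      (by exact_mod_cast hN.le))]
    exact dvd_mul_right _ _

end CommRing

end Polynomial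

theorem G0_map_eval_mulVec (n k : ℕ) (z : ℂ) (w : Fin (n + 1) → ℂ) :
    ((G0 n k).map (fun p => p.eval z)).mulVec w = toFn (k + 1) (taylor z (ofFn (n + 1) w)) := by
  ext i
  rw [toFn_apply, taylor_coeff, ofFn_eq_sum_monomial, map_sum, eval_finsetSum]
  simp only [Matrix.mulVec, dotProduct, G0, Matrix.map_apply, Matrix.of_apply,
    hasseDeriv_monomial, eval_monomial, eval_mul, eval_C, eval_pow, eval_X]
  exact Finset.sum_congr rfl fun α _ => by ring

theorem F0_map_eval_mulVec (n k : ℕ) (z : ℂ) (v : Fin (n - k) → ℂ) :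
    ((F0 n k).map (fun p => p.eval z)).mulVec v =
      toFn (n + 1) ((X - Polynomial.C z) ^ (k + 1) * ofFn (n - k) v) := by
  ext α
  simp only [Matrix.mulVec, dotProduct, F0, Matrix.map_apply, Matrix.of_apply, toFn_apply,
    ofFn_eq_sum_monomial, Finset.mul_sum, finsetSum_coeff, ← C_mul_X_pow_eq_monomial]
  refine Finset.sum_congr rfl fun β _ => ?_
  rw [mul_left_comm, coeff_C_mul, coeff_mul_X_pow', sub_eq_add_neg, ← C_neg, coeff_X_add_C_pow]
  split_ifs with h₁ h₂ h₂
  · simp only [eval_mul, eval_C, eval_pow, eval_neg, eval_X]; ring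
  · omega
  · rw [Nat.choose_eq_zero_of_lt (by omega)]; simp
  · simp

theorem gbinom_natCast_s16 (a r : ℕ) : gbinom a r = (a.choose r : ℂ) := by
  rw [Nat.cast_choose_eq_descPochhammer_div, descPochhammer_eval_eq_prod_range, gbinom,
    Int.cast_natCast]

theorem sum_range_neg_one_pow_mul_choose_mul_choose {R : Type*} [CommRing R] {N a : ℕ}
    (ha : a ≤ N) (i : ℕ) :
    ∑ j ∈ Finset.range (i + 1), (-1 : R) ^ j * ((N - j).choose (i - j) * (N - a).choose j) =
      a.choose i := by
  set m := N - a
  have hexpand : ((X + 1) ^ a : R[X]) = ∑ j ∈ Finset.range (m + 1),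
      Polynomial.C ((-1 : R) ^ j * m.choose j) * (X ^ j * (X + 1) ^ (N - j)) := by
    have hone : ((-X + (X + 1)) : R[X]) = 1 := by ring
    calc ((X + 1) ^ a : R[X]) = (-X + (X + 1)) ^ m * (X + 1) ^ a := by
          rw [hone, one_pow, one_mul]
      _ = _ := by
        rw [add_pow, Finset.sum_mul]
        refine Finset.sum_congr rfl fun j hj => ?_
        have hj : j ≤ m := Nat.lt_succ_iff.mp (Finset.mem_range.mp hj)
        rw [show N - j = (m - j) + a by omega, pow_add, neg_pow, map_mul, map_pow, map_neg,
          map_one, ← C_eq_natCast, map_natCast]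
        ring
  have hcoeff := congrArg (coeff · i) hexpand
  simp only [coeff_X_add_one_pow, finsetSum_coeff, coeff_C_mul, coeff_X_pow_mul'] at hcoeff
  rw [hcoeff]
  calc _ = ∑ j ∈ Finset.range (i + 1),
        (-1 : R) ^ j * m.choose j * if j ≤ i then ((N - j).choose (i - j) : R) else 0 :=
        Finset.sum_congr rfl fun j hj => by
          rw [if_pos (Nat.lt_succ_iff.mp (Finset.mem_range.mp hj))]; ring
    _ = ∑ j ∈ Finset.range (i + m + 1),
        (-1 : R) ^ j * m.choose j * if j ≤ i then ((N - j).choose (i - j) : R) else 0 :=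
        Finset.sum_subset (Finset.range_subset_range.mpr (by omega)) fun j _ hj => by
          rw [if_neg (by simpa [Nat.lt_succ_iff] using hj), mul_zero]
    _ = _ :=
        (Finset.sum_subset (Finset.range_subset_range.mpr (by omega)) fun j _ hj => by
          rw [Nat.choose_eq_zero_of_lt (by simpa [Nat.lt_succ_iff] using hj)]; simp).symm

-- The `k`-jet evaluation in the chart `w = z⁻¹`, where the basis section `t^α` is `s^(n-α)`.
noncomputable def G1 (n k : ℕ) : Matrix (Fin (k + 1)) (Fin (n + 1)) (LaurentPolynomial ℂ) :=
  Matrix.of fun j α =>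
    LaurentPolynomial.C ((n - α.val).choose j.val : ℂ) * T ((α.val : ℤ) + j.val - n)

theorem jetTransition_mul_G1 (n k : ℕ) (hkn : k ≤ n) :
    jetTransition n k * G1 n k = (G0 n k).map (fun p => p.toLaurent) := by
  ext i α
  have hi : i.val ≤ k := Nat.lt_succ_iff.mp i.isLt
  have hterm (j : Fin (k + 1)) : jetTransition n k i j * G1 n k j α =
      LaurentPolynomial.C (if j.val ≤ i.val then
        (-1 : ℂ) ^ j.val * ((n - j.val).choose (i.val - j.val) * (n - α.val).choose j.val)
        else 0) * T ((α.val : ℤ) - i.val) := by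
    simp only [jetTransition, G1, Matrix.of_apply]
    split_ifs with hj
    · rw [show (n : ℤ) - j.val = ((n - j.val : ℕ) : ℤ) by omega, gbinom_natCast_s16,
        mul_mul_mul_comm, ← map_mul, ← T_add]
      congr 2 <;> ring
    · rw [map_zero, zero_mul, zero_mul]
  rw [Matrix.mul_apply, Finset.sum_congr rfl fun j _ => hterm j, ← Finset.sum_mul, ← map_sum,
    Fin.sum_univ_eq_sum_range (fun j => if j ≤ i.val then
        (-1 : ℂ) ^ j * ((n - j).choose (i.val - j) * (n - α.val).choose j) else 0),
    ← Finset.sum_subset (Finset.range_subset_range.mpr (by omega : i.val + 1 ≤ k + 1))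
      fun j _ hj => if_neg (by simpa [Nat.lt_succ_iff] using hj),
    Finset.sum_congr rfl fun j hj => if_pos (Nat.lt_succ_iff.mp (Finset.mem_range.mp hj)),
    sum_range_neg_one_pow_mul_choose_mul_choose (Nat.lt_succ_iff.mp α.isLt)]
  simp only [G0, Matrix.map_apply, Matrix.of_apply, toLaurent_C_mul_X_pow]
  by_cases hiα : i.val ≤ α.val
  · rw [Nat.cast_sub hiα]
  · rw [Nat.choose_eq_zero_of_lt (by omega), Nat.cast_zero, map_zero, zero_mul, zero_mul]

theorem isAntiPolyFun_C_mul_T {c : ℂ} {e : ℤ} (h : e ≤ 0 ∨ c = 0) :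
    IsAntiPolyFun (LaurentPolynomial.C c * T e) := by
  intro i hi
  rw [← single_eq_C_mul_T, AddMonoidAlgebra.coeff_single, Finsupp.single_apply]
  rcases h with h | rfl
  · exact if_neg (by omega)
  · exact ite_self 0

theorem isAntiPolyFun_G1 (n k : ℕ) (i : Fin (k + 1)) (α : Fin (n + 1)) :
    IsAntiPolyFun (G1 n k i α) := by
  refine isAntiPolyFun_C_mul_T ?_
  by_cases h : (α.val : ℤ) + i.val - n ≤ 0
  · exact Or.inl h
  · exact Or.inr (by rw [Nat.choose_eq_zero_of_lt (by omega), Nat.cast_zero])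

theorem isAntiPolyFun_T_mul_F0 (n k : ℕ) (α : Fin (n + 1)) (β : Fin (n - k)) :
    IsAntiPolyFun (T (-(k + 1 : ℤ)) * ((F0 n k) α β).toLaurent) := by
  have hmonomial (c : ℂ) (e : ℕ) (he : e ≤ k + 1) :
      IsAntiPolyFun (T (-(k + 1 : ℤ)) * (Polynomial.C c * (-X) ^ e).toLaurent) := by
    rw [neg_pow, mul_left_comm, ← map_one Polynomial.C, ← map_neg, ← map_pow, ← mul_assoc,
      ← map_mul, toLaurent_C_mul_X_pow, mul_left_comm, ← T_add]
    exact isAntiPolyFun_C_mul_T (Or.inl (by omega))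
  simp only [F0, Matrix.of_apply]
  split_ifs with h
  · exact hmonomial _ _ (Nat.sub_le _ _)
  · intro i _
    rw [map_zero, mul_zero]
    rfl

namespace LaurentPolynomial

theorem prod_C_mul_T {R ι : Type*} [CommSemiring R] (s : Finset ι) (a : ι → R)
    (e : ι → ℤ) :
    ∏ x ∈ s, (C (a x) * T (e x)) = C (∏ x ∈ s, a x) * T (∑ x ∈ s, e x) := by
  induction s using Finset.cons_induction with
  | empty => simp
  | cons i s hi ih =>
    rw [Finset.prod_cons, Finset.prod_cons, Finset.sum_cons, ih, map_mul, T_add]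
    ring

end LaurentPolynomial

theorem sum_range_sub_sub (n : ℤ) (m : ℕ) :
    ∑ i ∈ Finset.range m, (n - i - i) = m * (n - m + 1) := by
  induction m with
  | zero => simp
  | succ m ih => rw [Finset.sum_range_succ, ih]; push_cast; ring

theorem jetTransition_isLowerTriangular (n : ℤ) (k : ℕ) :
    (jetTransition n k).IsLowerTriangular := fun i j hij =>
  if_neg (not_le.mpr (show i.val < j.val from hij))

theorem jetTransition_apply_self (n : ℤ) (k : ℕ) (i : Fin (k + 1)) :
    jetTransition n k i i = LaurentPolynomial.C ((-1 : ℂ) ^ i.val) * T (n - i.val - i.val) := by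
  simp [jetTransition, gbinom]

theorem det_jetTransition (n : ℤ) (k : ℕ) :
    (jetTransition n k).det =
      LaurentPolynomial.C (∏ i : Fin (k + 1), (-1 : ℂ) ^ i.val) * T ((k + 1) * (n - k)) := by
  rw [Matrix.det_of_isLowerTriangular _ (jetTransition_isLowerTriangular n k)]
  simp only [jetTransition_apply_self, LaurentPolynomial.prod_C_mul_T]
  rw [Fin.sum_univ_eq_sum_range (fun i => n - i - i), sum_range_sub_sub]
  congr 2
  push_cast
  ring

theorem jet_exact_sequence_large_twist (n k : ℕ) (hkn : k ≤ n) :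
    (∀ z : ℂ,
      Function.Injective (fun v : Fin (n - k) → ℂ =>
        ((F0 n k).map (fun p => p.eval z)).mulVec v) ∧
      Function.Surjective (fun w : Fin (n + 1) → ℂ =>
        ((G0 n k).map (fun p => p.eval z)).mulVec w) ∧
      {w : Fin (n + 1) → ℂ | ((G0 n k).map (fun p => p.eval z)).mulVec w = 0} =
        Set.range (fun v : Fin (n - k) → ℂ =>
          ((F0 n k).map (fun p => p.eval z)).mulVec v)) ∧
    (∃ G1 : Matrix (Fin (k + 1)) (Fin (n + 1)) (LaurentPolynomial ℂ),
      (∀ i j, IsAntiPolyFun (G1 i j)) ∧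
      jetTransition n k * G1 = (G0 n k).map (fun p => p.toLaurent)) ∧
    (∀ α β, IsAntiPolyFun (T (-(k + 1 : ℤ)) * ((F0 n k) α β).toLaurent)) ∧
    (∃ c : ℂ, c ≠ 0 ∧
      (jetTransition n k).det = LaurentPolynomial.C c * T ((k + 1) * ((n : ℤ) - k))) := by
  have hdim : n - k + (k + 1) = n + 1 := by omega
  refine ⟨fun z => ?_, ⟨G1 n k, isAntiPolyFun_G1 n k, jetTransition_mul_G1 n k hkn⟩,
    isAntiPolyFun_T_mul_F0 n k,
    ⟨_, Finset.prod_ne_zero_iff.mpr fun i _ => pow_ne_zero _ (neg_ne_zero.mpr one_ne_zero),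
      det_jetTransition n k⟩⟩
  simp only [G0_map_eval_mulVec, F0_map_eval_mulVec]
  exact ⟨injective_toFn_X_sub_C_pow_mul_ofFn z hdim.le, surjective_toFn_taylor_ofFn z (by omega),
    setOf_toFn_taylor_ofFn_eq_zero_eq_range z hdim⟩
end

section
/- Every holomorphic vector bundle F of rank r on P^1 decomposes as a direct sum of line bundles F ≅ ⊕_{i=1}^r O(a_i) for integers a_i, and the multiset {a_1, …, a_r} is uniquely determined by F (Grothendieck splitting theorem). -/
/-!
STATEMENT 17 (Grothendieck splitting theorem): every holomorphic vector bundle F of rank r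
on P¹ decomposes as a direct sum of line bundles F ≅ ⊕_{i=1}^r O(a_i), and the multiset
{a_1, …, a_r} is uniquely determined by F.

Formalization notes (transition-matrix / Birkhoff factorization model): cover P¹ by the two
standard charts U₀ = ℂ (coordinate z) and U₁ (coordinate w = 1/z), with U₀ ∩ U₁ = ℂ*.
A rank-r holomorphic (equivalently, algebraic) vector bundle on P¹ is described by its
transition matrix A = A(z), an r×r matrix of holomorphic functions on ℂ* which is invertible
there; in the algebraic category A is a matrix of Laurent polynomials whose determinant is a
unit of ℂ[z, z⁻¹] (i.e. c·zᵏ, exactly the Laurent polynomials non-vanishing on ℂ*).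
Two transition matrices A, B define isomorphic bundles iff B = P · A · Q where P is a matrix
of functions holomorphic and invertible on U₀ (entries in ℂ[z], with inverse of the same
form) and Q likewise for U₁ (entries in ℂ[z⁻¹], with inverse of the same form).
The line bundle O(a) has transition matrix the 1×1 matrix (zᵃ) (`LaurentPolynomial.T a`),
so ⊕ O(a_i) has transition matrix diagonal(z^{a_1}, …, z^{a_r}).  Grothendieck's theorem is
then: every A as above is equivalent to some diagonal(z^{a_i}) (Birkhoff factorization), and
the multiset of exponents is unique.
-/

open LaurentPolynomial

/-!
Existence is Birkhoff factorization, by induction on the rank. Euclid's algorithm in `ℂ[z]`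
(row operations) brings the first column of `A` to `(z^a, 0, …, 0)`. All exponents `a`
reachable in this way are bounded by the degrees of the entries of `A` (if `P A Q` has first
column `z^a e₀`, then `A` maps the nonzero vector `Q e₀`, of degree `≤ 0`, to `z^a` times the
nonzero polynomial vector `P⁻¹ e₀`), so we may choose `a` maximal. The induction hypothesis
diagonalizes the complementary block to `diag(z^{b_m})`, after which row operations over
`ℂ[z]` and column operations over `ℂ[z⁻¹]` leave in the first row only monomials `z^i` with
`a < i < b_m`. If some entry `γ_m` survived, with lowest term `z^j`, swapping its column to
the front and a Bézout move for the coprime pair `(z^{-j} γ_m, z^{b_m - j})` would produce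
the first column `(z^j, 0, …, 0)` with `j > a`, contradicting maximality.

For uniqueness, if `P · diag(z^a) · Q = diag(z^b)` with `P` over `ℂ[z]` and `Q` over
`ℂ[z⁻¹]`, then `P i j ≠ 0` forces `a j ≤ b i`. Hence for every `c` the block of `P⁻¹ P = 1`
indexed by `{j | c ≤ a j}` factors through `{i | c ≤ b i}`, so
`#{j | c ≤ a j} ≤ #{i | c ≤ b i}`; by symmetry these counts agree for all `c`, and they
determine the multiset.
-/

open Matrix

section Gauge

variable {A : Type*} [CommRing A] {S : Subring A} {n : Type*}

theorem Matrix.one_apply_mem [DecidableEq n] (i j : n) : (1 : Matrix n n A) i j ∈ S := by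
  rw [one_apply]
  split_ifs
  exacts [S.one_mem, S.zero_mem]

theorem Matrix.mul_apply_mem [Fintype n] {P Q : Matrix n n A} (hP : ∀ i j, P i j ∈ S)
    (hQ : ∀ i j, Q i j ∈ S) (i j : n) : (P * Q) i j ∈ S :=
  S.sum_mem fun k _ => S.mul_mem (hP i k) (hQ k j)

variable [Fintype n] [DecidableEq n]

def IsGauge (S : Subring A) (P : Matrix n n A) : Prop :=
  (∀ i j, P i j ∈ S) ∧ ∃ P' : Matrix n n A, (∀ i j, P' i j ∈ S) ∧ P * P' = 1 ∧ P' * P = 1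

namespace IsGauge

theorem one : IsGauge S (1 : Matrix n n A) :=
  ⟨one_apply_mem, 1, one_apply_mem, mul_one 1, mul_one 1⟩

theorem mul {P Q : Matrix n n A} (hP : IsGauge S P) (hQ : IsGauge S Q) : IsGauge S (P * Q) := by
  obtain ⟨hPS, P', hP'S, hPP', hP'P⟩ := hP
  obtain ⟨hQS, Q', hQ'S, hQQ', hQ'Q⟩ := hQ
  refine ⟨mul_apply_mem hPS hQS, Q' * P', mul_apply_mem hQ'S hP'S, ?_, ?_⟩
  · rw [Matrix.mul_assoc, ← Matrix.mul_assoc Q, hQQ', Matrix.one_mul, hPP']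
  · rw [Matrix.mul_assoc, ← Matrix.mul_assoc P', hP'P, Matrix.one_mul, hQ'Q]

theorem exists_inv {P : Matrix n n A} (hP : IsGauge S P) :
    ∃ P', IsGauge S P' ∧ P * P' = 1 ∧ P' * P = 1 := by
  obtain ⟨hPS, P', hP'S, hPP', hP'P⟩ := hP
  exact ⟨P', ⟨hP'S, P, hPS, hP'P, hPP'⟩, hPP', hP'P⟩

theorem smul {P : Matrix n n A} {u v : A} (hP : IsGauge S P) (hu : u ∈ S) (hv : v ∈ S)
    (huv : u * v = 1) : IsGauge S (u • P) := by
  obtain ⟨hPS, P', hP'S, hPP', hP'P⟩ := hP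
  refine ⟨fun i j => S.mul_mem hu (hPS i j), v • P', fun i j => S.mul_mem hv (hP'S i j), ?_, ?_⟩
  · rw [smul_mul_smul_comm, hPP', huv, one_smul]
  · rw [smul_mul_smul_comm, hP'P, mul_comm, huv, one_smul]

theorem isUnit_det {P : Matrix n n A} (hP : IsGauge S P) : IsUnit P.det := by
  obtain ⟨-, P', -, hPP', -⟩ := hP
  exact IsUnit.of_mul_eq_one P'.det (by rw [← det_mul, hPP', det_one])

end IsGauge

theorem isGauge_permMatrix (σ : Equiv.Perm n) :
    IsGauge S (σ.toPEquiv.toMatrix : Matrix n n A) := by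
  have hS (τ : Equiv.Perm n) (i j : n) : (τ.toPEquiv.toMatrix : Matrix n n A) i j ∈ S := by
    rw [PEquiv.toMatrix_apply]
    split_ifs
    exacts [S.one_mem, S.zero_mem]
  refine ⟨hS σ, σ.symm.toPEquiv.toMatrix, hS σ.symm, ?_, ?_⟩ <;>
    rw [← PEquiv.toMatrix_trans, ← Equiv.toPEquiv_trans] <;> simp

theorem Equiv.swap_toMatrix_mulVec_single {R : Type*} [CommRing R] (i k : n) :
    (Equiv.swap i k).toPEquiv.toMatrix *ᵥ (Pi.single i 1 : n → R) = Pi.single k 1 := by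
  rw [PEquiv.toMatrix_toPEquiv_mulVec, Equiv.comp_swap_eq_update]
  funext l
  simp only [Function.update_apply, Pi.single_apply]
  grind

def pairMatrix (i j : n) (X : Matrix (Fin 2) (Fin 2) A) : Matrix n n A :=
  ((1 : Matrix n n A).updateRow i (Pi.single i (X 0 0) + Pi.single j (X 0 1))).updateRow j
    (Pi.single i (X 1 0) + Pi.single j (X 1 1))

section pairMatrix

variable {i j : n}

theorem pairMatrix_mulVec (X : Matrix (Fin 2) (Fin 2) A) (v : n → A) :
    pairMatrix i j X *ᵥ v = Function.update (Function.update v i (X 0 0 * v i + X 0 1 * v j)) j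
      (X 1 0 * v i + X 1 1 * v j) := by
  simp [pairMatrix, updateRow_mulVec, add_dotProduct]

theorem pairMatrix_mul (hij : i ≠ j) (X Y : Matrix (Fin 2) (Fin 2) A) :
    pairMatrix i j X * pairMatrix i j Y = pairMatrix i j (X * Y) := by
  refine ext_iff_mulVec.2 fun v => ?_
  rw [← mulVec_mulVec]
  ext k
  simp only [pairMatrix_mulVec, Function.update_apply, hij, hij.symm, mul_apply,
    Fin.sum_univ_two]
  split_ifs <;> first | contradiction | ring

theorem pairMatrix_one : pairMatrix i j (1 : Matrix (Fin 2) (Fin 2) A) = 1 := by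
  refine ext_iff_mulVec.2 fun v => ?_
  ext k
  simp only [pairMatrix_mulVec, Function.update_apply, one_apply, one_mulVec]
  split_ifs <;> simp_all

theorem isGauge_pairMatrix (hij : i ≠ j) {X X' : Matrix (Fin 2) (Fin 2) A}
    (hX : ∀ a b, X a b ∈ S) (hX' : ∀ a b, X' a b ∈ S) (h : X * X' = 1) (h' : X' * X = 1) :
    IsGauge S (pairMatrix i j X) := by
  have hS {Y : Matrix (Fin 2) (Fin 2) A} (hY : ∀ a b, Y a b ∈ S) (k l : n) :
      pairMatrix i j Y k l ∈ S := by
    have hsingle {a : A} (ha : a ∈ S) (m : n) : (Pi.single m a : n → A) l ∈ S := by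
      rw [Pi.single_apply]
      split_ifs
      exacts [ha, S.zero_mem]
    simp only [pairMatrix, updateRow_apply]
    split_ifs
    exacts [S.add_mem (hsingle (hY 1 0) _) (hsingle (hY 1 1) _),
      S.add_mem (hsingle (hY 0 0) _) (hsingle (hY 0 1) _), one_apply_mem k l]
  refine ⟨hS hX, pairMatrix i j X', hS hX', ?_, ?_⟩
  · rw [pairMatrix_mul hij, h, pairMatrix_one]
  · rw [pairMatrix_mul hij, h', pairMatrix_one]

theorem exists_isGauge_mulVec_single_add_single (hij : i ≠ j) {f g x y : A} (hf : f ∈ S)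
    (hg : g ∈ S) (hx : x ∈ S) (hy : y ∈ S) (hb : x * f + y * g = 1) (h : A) :
    ∃ G, IsGauge S G ∧ G *ᵥ (Pi.single i (f * h) + Pi.single j (g * h)) = Pi.single i h := by
  have hX : ∀ a b, !![x, y; -g, f] a b ∈ S := by
    intro a b
    fin_cases a <;> fin_cases b <;> simp [hx, hy, hf, hg]
  have hX' : ∀ a b, !![f, -y; g, x] a b ∈ S := by
    intro a b
    fin_cases a <;> fin_cases b <;> simp [hx, hy, hf, hg]
  have hXX' : !![x, y; -g, f] * !![f, -y; g, x] = 1 := by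
    rw [mul_fin_two, one_fin_two]
    ext a b
    fin_cases a <;> fin_cases b <;> simp <;> first | ring1 | linear_combination hb
  have hX'X : !![f, -y; g, x] * !![x, y; -g, f] = 1 := by
    rw [mul_fin_two, one_fin_two]
    ext a b
    fin_cases a <;> fin_cases b <;> simp <;> first | ring1 | linear_combination hb
  refine ⟨pairMatrix i j !![x, y; -g, f], isGauge_pairMatrix hij hX hX' hXX' hX'X, ?_⟩
  ext k
  simp only [pairMatrix_mulVec, Function.update_apply, Pi.add_apply, Pi.single_apply, hij,
    hij.symm]
  split_ifs <;> simp_all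
  · ring
  · linear_combination h * hb

end pairMatrix

end Gauge

section Bordered

variable {A : Type*} [CommRing A] {q : ℕ}

/-- The block matrix `!![d, c; 0, D]`. -/
def bordered (d : A) (c : Fin q → A) (D : Matrix (Fin q) (Fin q) A) :
    Matrix (Fin (q + 1)) (Fin (q + 1)) A :=
  Matrix.of fun i j => Fin.cases (Fin.cases d c j) (fun i' => Fin.cases 0 (D i') j) i

variable (d : A) (c : Fin q → A) (D : Matrix (Fin q) (Fin q) A)

@[simp] theorem bordered_zero_zero : bordered d c D 0 0 = d := rfl
@[simp] theorem bordered_zero_succ (j : Fin q) : bordered d c D 0 j.succ = c j := rfl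
@[simp] theorem bordered_succ_zero (i : Fin q) : bordered d c D i.succ 0 = 0 := rfl
@[simp] theorem bordered_succ_succ (i j : Fin q) : bordered d c D i.succ j.succ = D i j := rfl

theorem bordered_mulVec (x : A) (v : Fin q → A) :
    bordered d c D *ᵥ Fin.cons x v = Fin.cons (d * x + c ⬝ᵥ v) (D *ᵥ v) := by
  ext i
  cases i using Fin.cases <;> simp [mulVec, dotProduct, Fin.sum_univ_succ]

theorem bordered_mul_bordered (d' : A) (c' : Fin q → A) (D' : Matrix (Fin q) (Fin q) A) :
    bordered d c D * bordered d' c' D' = bordered (d * d') (d • c' + c ᵥ* D') (D * D') := by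
  ext i j
  cases i using Fin.cases <;> cases j using Fin.cases <;>
    simp [Matrix.mul_apply, Fin.sum_univ_succ, vecMul, dotProduct]

theorem bordered_one_zero_one :
    (bordered 1 0 1 : Matrix (Fin (q + 1)) (Fin (q + 1)) A) = 1 := by
  ext i j
  cases i using Fin.cases <;> cases j using Fin.cases <;>
    simp [one_apply, Fin.succ_ne_zero, (Fin.succ_ne_zero _).symm]

theorem bordered_zero_diagonal (w : Fin q → A) :
    bordered d 0 (diagonal w) = diagonal (Fin.cons d w) := by
  ext i j
  cases i using Fin.cases <;> cases j using Fin.cases <;>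
    simp [diagonal_apply, Fin.succ_ne_zero, (Fin.succ_ne_zero _).symm]

theorem det_bordered : (bordered d c D).det = d * D.det := by
  rw [det_succ_column_zero, Fin.sum_univ_succ]
  simp [submatrix]
  rfl

theorem eq_bordered_of_mulVec_single {M : Matrix (Fin (q + 1)) (Fin (q + 1)) A} {x : A}
    (h : M *ᵥ Pi.single 0 1 = Pi.single 0 x) :
    M = bordered x (fun j => M 0 j.succ) (M.submatrix Fin.succ Fin.succ) := by
  have hcol (i) : M i 0 = (Pi.single 0 x : Fin (q + 1) → A) i := by simpa using congrFun h i
  ext i j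
  cases i using Fin.cases <;> cases j using Fin.cases <;> simp [hcol]

theorem Fin.cons_single {α : Type*} [AddZeroClass α] (x y : α) (m : Fin q) :
    (Fin.cons x (Pi.single m y) : Fin (q + 1) → α) = Pi.single 0 x + Pi.single m.succ y := by
  ext i
  cases i using Fin.cases <;> simp [Pi.single_apply, Fin.succ_ne_zero, (Fin.succ_ne_zero _).symm]

theorem bordered_diagonal_mulVec_single_succ (w : Fin q → A) (m : Fin q) :
    bordered d c (diagonal w) *ᵥ Pi.single m.succ 1 =
      Pi.single 0 (c m) + Pi.single m.succ (w m) := by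
  rw [← zero_add (Pi.single m.succ 1), ← Pi.single_zero 0, ← Fin.cons_single, bordered_mulVec,
    dotProduct_single, diagonal_mulVec_single, Fin.cons_single, mul_zero, zero_add, mul_one,
    mul_one]

theorem isGauge_bordered {S : Subring A} {c : Fin q → A} {D : Matrix (Fin q) (Fin q) A}
    (hc : ∀ j, c j ∈ S) (hD : IsGauge S D) : IsGauge S (bordered 1 c D) := by
  obtain ⟨hDS, D', hD'S, hDD', hD'D⟩ := hD
  have hS {c : Fin q → A} {D : Matrix (Fin q) (Fin q) A} (hc : ∀ j, c j ∈ S)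
      (hD : ∀ i j, D i j ∈ S) (i j : Fin (q + 1)) : bordered 1 c D i j ∈ S := by
    cases i using Fin.cases <;> cases j using Fin.cases <;> simp [hc, hD, S.one_mem, S.zero_mem]
  refine ⟨hS hc hDS, bordered 1 (-(c ᵥ* D')) D', hS (fun j => ?_) hD'S, ?_, ?_⟩
  · simp only [Pi.neg_apply, vecMul, dotProduct]
    exact S.neg_mem (S.sum_mem fun k _ => S.mul_mem (hc k) (hD'S k j))
  · rw [bordered_mul_bordered, hDD', one_smul, neg_add_cancel, mul_one, bordered_one_zero_one]
  · rw [bordered_mul_bordered, hD'D, one_smul, neg_vecMul, vecMul_vecMul, hD'D, vecMul_one,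
      add_neg_cancel, mul_one, bordered_one_zero_one]

end Bordered

section Charts

open scoped Polynomial
open Polynomial (toLaurent)

theorem LaurentPolynomial.coeff_T_mul {R : Type*} [Semiring R] (n m : ℤ) (f : R[T;T⁻¹]) :
    (T n * f).coeff m = f.coeff (m - n) := by
  rw [T, AddMonoidAlgebra.coeff_single_mul_apply, one_mul, neg_add_eq_sub]

theorem LaurentPolynomial.T_mul_T_neg_mul {R : Type*} [CommSemiring R] (n : ℤ) (f : R[T;T⁻¹]) :
    T n * (T (-n) * f) = f := by
  rw [← mul_assoc, ← T_add, add_neg_cancel, T_zero, one_mul]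

theorem Polynomial.coeff_toLaurent_natCast {R : Type*} [Semiring R] (p : R[X]) (d : ℕ) :
    (toLaurent p).coeff d = p.coeff d := by
  rw [coeff_toLaurent]
  exact Finsupp.mapDomain_apply Nat.castEmbedding.injective _ d

theorem Polynomial.coeff_toLaurent_of_neg {R : Type*} [Semiring R] (p : R[X]) {i : ℤ}
    (hi : i < 0) : (toLaurent p).coeff i = 0 := by
  rw [← Finsupp.notMem_support_iff, support_coeff_toLaurent]
  simp only [Finset.mem_map, Nat.castEmbedding_apply, not_exists, not_and]
  omega

theorem isPolyFun_iff_mem_range {f : ℂ[T;T⁻¹]} :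
    IsPolyFun f ↔ f ∈ (toLaurent : ℂ[X] →+* ℂ[T;T⁻¹]).range := by
  refine ⟨fun hf => ?_, fun ⟨p, hp⟩ i hi => hp ▸ p.coeff_toLaurent_of_neg hi⟩
  obtain ⟨n, p, hp⟩ := exists_T_pow f
  obtain ⟨g, rfl⟩ : Polynomial.X ^ n ∣ p := by
    refine Polynomial.X_pow_dvd_iff.2 fun d hd => ?_
    rw [← p.coeff_toLaurent_natCast, hp, ← T_mul, coeff_T_mul]
    exact hf _ (by omega)
  refine ⟨g, (isUnit_T (n : ℤ)).mul_left_cancel ?_⟩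
  rw [T_mul n f, ← hp, map_mul, Polynomial.toLaurent_X_pow]

theorem isAntiPolyFun_iff_isPolyFun_invert {f : ℂ[T;T⁻¹]} :
    IsAntiPolyFun f ↔ IsPolyFun (invert f) := by
  simp only [IsAntiPolyFun, IsPolyFun, invert_apply]
  exact ⟨fun h i hi => h (-i) (by omega), fun h i hi => by simpa using h (-i) (by omega)⟩

noncomputable def polySubring : Subring ℂ[T;T⁻¹] :=
  (toLaurent : ℂ[X] →+* ℂ[T;T⁻¹]).range.copy {f | IsPolyFun f}
    (Set.ext fun _ => isPolyFun_iff_mem_range)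

noncomputable def antiPolySubring : Subring ℂ[T;T⁻¹] :=
  (polySubring.comap (invert : ℂ[T;T⁻¹] ≃ₐ[ℂ] ℂ[T;T⁻¹]).toRingHom).copy {f | IsAntiPolyFun f}
    (Set.ext fun _ => isAntiPolyFun_iff_isPolyFun_invert)

theorem mem_polySubring {f : ℂ[T;T⁻¹]} : f ∈ polySubring ↔ IsPolyFun f := Iff.rfl

theorem mem_antiPolySubring {f : ℂ[T;T⁻¹]} : f ∈ antiPolySubring ↔ IsAntiPolyFun f := Iff.rfl

theorem mem_antiPolySubring_iff_invert_mem {f : ℂ[T;T⁻¹]} :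
    f ∈ antiPolySubring ↔ invert f ∈ polySubring :=
  isAntiPolyFun_iff_isPolyFun_invert

theorem toLaurent_mem_polySubring (p : ℂ[X]) : toLaurent p ∈ polySubring :=
  isPolyFun_iff_mem_range.2 ⟨p, rfl⟩

theorem T_mem_polySubring {n : ℤ} (hn : 0 ≤ n) : (T n : ℂ[T;T⁻¹]) ∈ polySubring := by
  lift n to ℕ using hn
  simpa using toLaurent_mem_polySubring (Polynomial.X ^ n)

theorem T_mem_antiPolySubring {n : ℤ} (hn : n ≤ 0) : (T n : ℂ[T;T⁻¹]) ∈ antiPolySubring := by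
  rw [mem_antiPolySubring_iff_invert_mem, invert_T]
  exact T_mem_polySubring (by omega)

theorem C_mem_polySubring (c : ℂ) : C c ∈ polySubring := by
  simpa using toLaurent_mem_polySubring (Polynomial.C c)

theorem nonpos_of_T_mul_mem_antiPolySubring {k : ℤ} {w : ℂ[T;T⁻¹]} (hw : w ∈ polySubring)
    (hw0 : w ≠ 0) (h : T k * w ∈ antiPolySubring) : k ≤ 0 := by
  obtain ⟨i, hi⟩ : ∃ i, w.coeff i ≠ 0 := by
    by_contra! h0
    exact hw0 (LaurentPolynomial.ext h0)
  have hi0 : 0 ≤ i := by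
    by_contra hneg
    exact hi (hw i (by omega))
  by_contra hk
  have := h (k + i) (by omega)
  rw [coeff_T_mul, add_sub_cancel_left] at this
  exact hi this

theorem exists_T_mul_mem_antiPolySubring (f : ℂ[T;T⁻¹]) :
    ∃ N : ℤ, ∀ n, N ≤ n → T (-n) * f ∈ antiPolySubring := by
  obtain ⟨N, p, hp⟩ := exists_T_pow (invert f)
  refine ⟨N, fun n hn => ?_⟩
  have hf : T (-N) * f = invert (toLaurent p) := by
    rw [hp, map_mul, involutive_invert, invert_T, T_mul]
  have : T (-n) * f = T (N - n) * (T (-N) * f) := by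
    rw [← mul_assoc, ← T_add]
    ring_nf
  rw [this, hf]
  refine antiPolySubring.mul_mem (T_mem_antiPolySubring (by omega)) ?_
  rw [mem_antiPolySubring_iff_invert_mem, involutive_invert]
  exact toLaurent_mem_polySubring p

theorem Matrix.exists_T_mul_apply_mem_antiPolySubring {n : Type*} [Finite n]
    (M : Matrix n n ℂ[T;T⁻¹]) : ∃ Δ : ℤ, ∀ i j, T (-Δ) * M i j ∈ antiPolySubring := by
  choose N hN using fun p : n × n => exists_T_mul_mem_antiPolySubring (M p.1 p.2)
  obtain ⟨Δ, hΔ⟩ := Finite.exists_le N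
  exact ⟨Δ, fun i j => hN (i, j) Δ (hΔ (i, j))⟩

theorem exists_eq_C_mul_T_of_isUnit {f : ℂ[T;T⁻¹]} (hf : IsUnit f) :
    ∃ c ≠ 0, ∃ k, f = C c * T k := by
  obtain ⟨g, hfg⟩ := hf.exists_right_inv
  obtain ⟨n, p, hp⟩ := exists_T_pow f
  obtain ⟨m, s, hs⟩ := exists_T_pow g
  have hps : p * s = Polynomial.X ^ (n + m) := by
    apply Polynomial.toLaurent_injective
    rw [map_mul, hp, hs, Polynomial.toLaurent_X_pow, Nat.cast_add, T_add]
    linear_combination (T n * T m : ℂ[T;T⁻¹]) * hfg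
  obtain ⟨i, -, hi⟩ := (dvd_prime_pow Polynomial.prime_X _).1 (Dvd.intro s hps)
  obtain ⟨u, hu⟩ := hi.symm
  obtain ⟨c, hc, hcu⟩ := Polynomial.isUnit_iff.1 u.isUnit
  refine ⟨c, hc.ne_zero, i - n, (isUnit_T (n : ℤ)).mul_left_cancel ?_⟩
  rw [T_mul, ← hp, ← hu, ← hcu, map_mul, Polynomial.toLaurent_X_pow, Polynomial.toLaurent_C,
    mul_left_comm, ← T_add, add_sub_cancel, mul_comm]

theorem exists_eq_T_mul_add_add_T_mul (f : ℂ[T;T⁻¹]) (a b : ℤ) :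
    ∃ α ∈ antiPolySubring, ∃ β ∈ polySubring, ∃ γ : ℂ[T;T⁻¹],
      f = T a * α + γ + T b * β ∧ ∀ i, γ.coeff i ≠ 0 → a < i ∧ i < b := by
  classical
  let part (p : ℤ → Prop) [DecidablePred p] : ℂ[T;T⁻¹] :=
    AddMonoidAlgebra.ofCoeff (f.coeff.filter p)
  have hpart (p : ℤ → Prop) [DecidablePred p] (i : ℤ) :
      (part p).coeff i = if p i then f.coeff i else 0 := by
    simp [part, Finsupp.filter_apply]
  refine ⟨T (-a) * part (· ≤ a), mem_antiPolySubring.2 fun i hi => ?_,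
    T (-b) * part (fun i => a < i ∧ b ≤ i), mem_polySubring.2 fun i hi => ?_,
    part (fun i => a < i ∧ i < b), ?_, fun i hi => ?_⟩
  · rw [coeff_T_mul, hpart, if_neg (by omega)]
  · rw [coeff_T_mul, hpart, if_neg (by omega)]
  · rw [T_mul_T_neg_mul, T_mul_T_neg_mul]
    ext i
    simp only [AddMonoidAlgebra.coeff_add, Finsupp.add_apply, hpart]
    split_ifs <;> first | omega | simp
  · rw [hpart] at hi
    split_ifs at hi with h
    exacts [h, absurd rfl hi]

theorem exists_eq_mul_T_of_ne_zero {f : ℂ[T;T⁻¹]} (hf : f ≠ 0) :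
    ∃ j, f.coeff j ≠ 0 ∧ ∃ u ∈ polySubring, u.coeff 0 ≠ 0 ∧ f = u * T j := by
  have hsupp : f.coeff.support.Nonempty :=
    Finsupp.support_nonempty_iff.2 fun h => hf (LaurentPolynomial.ext (by simp [h]))
  have hj : f.coeff (f.coeff.support.min' hsupp) ≠ 0 :=
    Finsupp.mem_support_iff.1 (Finset.min'_mem _ _)
  refine ⟨_, hj, T (-f.coeff.support.min' hsupp) * f, mem_polySubring.2 fun i hi => ?_, ?_, ?_⟩
  · rw [coeff_T_mul]
    by_contra h
    have := Finset.min'_le _ _ (Finsupp.mem_support_iff.2 h)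
    omega
  · rwa [coeff_T_mul, zero_sub, neg_neg]
  · rw [← T_mul, T_mul_T_neg_mul]

theorem exists_polyGauge_mulVec_single_add_single {n : Type*} [Fintype n] [DecidableEq n]
    {i j : n} (hij : i ≠ j) (f g : ℂ[T;T⁻¹]) :
    ∃ G h, IsGauge polySubring G ∧ G *ᵥ (Pi.single i f + Pi.single j g) = Pi.single i h := by
  obtain ⟨N, p, hp⟩ := exists_T_pow f
  obtain ⟨M, s, hs⟩ := exists_T_pow g
  obtain ⟨p', s', hp', hs', hunit⟩ := extract_gcd (p * Polynomial.X ^ M) (s * Polynomial.X ^ N)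
  set d := gcd (p * Polynomial.X ^ M) (s * Polynomial.X ^ N)
  obtain ⟨x, y, hxy⟩ := (gcd_isUnit_iff_isRelPrime.1 hunit).isCoprime
  have hb : toLaurent x * toLaurent p' + toLaurent y * toLaurent s' = 1 := by
    simpa using congrArg toLaurent hxy
  have hshift {φ : ℂ[T;T⁻¹]} {π π' : ℂ[X]} {K L : ℕ} (hπ : toLaurent π = φ * T K)
      (hπ' : π * Polynomial.X ^ L = d * π') : φ = toLaurent π' * (toLaurent d * T (-(K + L))) := by
    rw [← mul_assoc, ← map_mul, mul_comm π' d, ← hπ', map_mul, hπ, Polynomial.toLaurent_X_pow,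
      mul_assoc, mul_assoc, ← T_add, ← T_add]
    simp
  obtain ⟨G, hG, hGv⟩ := exists_isGauge_mulVec_single_add_single hij
    (toLaurent_mem_polySubring p') (toLaurent_mem_polySubring s') (toLaurent_mem_polySubring x)
    (toLaurent_mem_polySubring y) hb (toLaurent d * T (-(N + M)))
  refine ⟨G, toLaurent d * T (-(N + M)), hG, ?_⟩
  rwa [hshift hp hp', hshift hs hs', add_comm (M : ℤ)]

theorem exists_bezout_T {u : ℂ[T;T⁻¹]} (hu : u ∈ polySubring) (hu0 : u.coeff 0 ≠ 0) (e : ℕ) :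
    ∃ x ∈ polySubring, ∃ y ∈ polySubring, x * u + y * T e = 1 := by
  obtain ⟨p, rfl⟩ := isPolyFun_iff_mem_range.1 hu
  have hX : ¬ Polynomial.X ∣ p := by
    rw [Polynomial.X_dvd_iff, ← p.coeff_toLaurent_natCast]
    exact_mod_cast hu0
  obtain ⟨x, y, hxy⟩ := (Polynomial.irreducible_X.coprime_iff_not_dvd.2 hX).symm.pow_right (n := e)
  refine ⟨toLaurent x, toLaurent_mem_polySubring x, toLaurent y, toLaurent_mem_polySubring y, ?_⟩
  simpa using congrArg toLaurent hxy

end Charts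

section Bundle

variable {r : ℕ} {A B C : Matrix (Fin r) (Fin r) ℂ[T;T⁻¹]}

theorem bundleEquiv_iff : BundleEquiv A B ↔ ∃ P Q : Matrix (Fin r) (Fin r) ℂ[T;T⁻¹],
    IsGauge polySubring P ∧ IsGauge antiPolySubring Q ∧ B = P * A * Q := Iff.rfl

namespace BundleEquiv

theorem gauge_mul_mul {P Q : Matrix (Fin r) (Fin r) ℂ[T;T⁻¹]} (hP : IsGauge polySubring P)
    (hQ : IsGauge antiPolySubring Q) : BundleEquiv A (P * A * Q) :=
  bundleEquiv_iff.2 ⟨P, Q, hP, hQ, rfl⟩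

theorem refl (A : Matrix (Fin r) (Fin r) ℂ[T;T⁻¹]) : BundleEquiv A A := by
  simpa using gauge_mul_mul (A := A) IsGauge.one IsGauge.one

theorem symm (h : BundleEquiv A B) : BundleEquiv B A := by
  obtain ⟨P, Q, hP, hQ, rfl⟩ := bundleEquiv_iff.1 h
  obtain ⟨P', hP', -, hP'P⟩ := hP.exists_inv
  obtain ⟨Q', hQ', hQQ', -⟩ := hQ.exists_inv
  convert gauge_mul_mul (A := P * A * Q) hP' hQ'
  simp only [← Matrix.mul_assoc, hP'P, Matrix.one_mul]
  rw [Matrix.mul_assoc, hQQ', Matrix.mul_one]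

theorem trans (h₁ : BundleEquiv A B) (h₂ : BundleEquiv B C) : BundleEquiv A C := by
  obtain ⟨P, Q, hP, hQ, rfl⟩ := bundleEquiv_iff.1 h₁
  obtain ⟨P', Q', hP', hQ', rfl⟩ := bundleEquiv_iff.1 h₂
  simpa only [Matrix.mul_assoc] using gauge_mul_mul (A := A) (hP'.mul hP) (hQ.mul hQ')

theorem isUnit_det (h : BundleEquiv A B) (hA : IsUnit A.det) : IsUnit B.det := by
  obtain ⟨P, Q, hP, hQ, rfl⟩ := bundleEquiv_iff.1 h
  rw [det_mul, det_mul]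
  exact (hP.isUnit_det.mul hA).mul hQ.isUnit_det

end BundleEquiv

end Bundle

section Existence

variable {q : ℕ}

/-- In bundle terms, `e₀` spans a sub-line-bundle isomorphic to `O(a)`. -/
def HasPivot (M : Matrix (Fin (q + 1)) (Fin (q + 1)) ℂ[T;T⁻¹]) (a : ℤ) : Prop :=
  M *ᵥ Pi.single 0 1 = Pi.single 0 (T a : ℂ[T;T⁻¹])

theorem exists_polyGauge_mulVec_eq_single : ∀ {q : ℕ} (v : Fin (q + 1) → ℂ[T;T⁻¹]),
    ∃ (P : Matrix (Fin (q + 1)) (Fin (q + 1)) ℂ[T;T⁻¹]) (d : ℂ[T;T⁻¹]),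
      IsGauge polySubring P ∧ P *ᵥ v = Pi.single 0 d
  | 0, v => ⟨1, v 0, IsGauge.one, by ext i; fin_cases i; simp⟩
  | q + 1, v => by
    obtain ⟨P, d, hP, hPv⟩ := exists_polyGauge_mulVec_eq_single (Fin.tail v)
    obtain ⟨G, h, hG, hGv⟩ := exists_polyGauge_mulVec_single_add_single
      (Fin.succ_ne_zero (0 : Fin (q + 1))).symm (v 0) d
    refine ⟨G * bordered 1 0 P, h,
      hG.mul (isGauge_bordered (c := 0) (fun _ => zero_mem _) hP), ?_⟩
    rw [← mulVec_mulVec, ← Fin.cons_self_tail v, bordered_mulVec, hPv, Fin.cons_single]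
    simpa using hGv

theorem exists_bundleEquiv_hasPivot {M : Matrix (Fin (q + 1)) (Fin (q + 1)) ℂ[T;T⁻¹]}
    (hM : IsUnit M.det) : ∃ N a, BundleEquiv M N ∧ HasPivot N a := by
  obtain ⟨P, d, hP, hPv⟩ := exists_polyGauge_mulVec_eq_single (M *ᵥ Pi.single 0 1)
  have hPM : (P * M) *ᵥ Pi.single 0 1 = Pi.single 0 d := by rw [← mulVec_mulVec, hPv]
  have hd : IsUnit d := by
    have := (BundleEquiv.gauge_mul_mul (A := M) hP IsGauge.one).isUnit_det hM
    rw [Matrix.mul_one, eq_bordered_of_mulVec_single hPM, det_bordered] at this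
    exact isUnit_of_mul_isUnit_left this
  obtain ⟨c, hc, k, rfl⟩ := exists_eq_C_mul_T_of_isUnit hd
  have hcc : C c⁻¹ * C c = (1 : ℂ[T;T⁻¹]) := by rw [← map_mul, inv_mul_cancel₀ hc, map_one]
  refine ⟨C c⁻¹ • P * M * 1, k, BundleEquiv.gauge_mul_mul
    (hP.smul (C_mem_polySubring _) (C_mem_polySubring _) hcc) IsGauge.one, ?_⟩
  rw [HasPivot, Matrix.mul_one, smul_mul_assoc, smul_mulVec, hPM, ← Pi.single_smul', smul_eq_mul,
    ← mul_assoc, hcc, one_mul]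

theorem HasPivot.le_of_bundleEquiv {M N : Matrix (Fin (q + 1)) (Fin (q + 1)) ℂ[T;T⁻¹]} {a Δ : ℤ}
    (ha : HasPivot N a) (h : BundleEquiv M N) (hM : IsUnit M.det)
    (hΔ : ∀ i j, T (-Δ) * M i j ∈ antiPolySubring) : a ≤ Δ := by
  obtain ⟨P, Q, hP, hQ, rfl⟩ := bundleEquiv_iff.1 h
  obtain ⟨P', hP', -, hP'P⟩ := hP.exists_inv
  obtain ⟨Q', -, -, hQ'Q⟩ := hQ.exists_inv
  set v := Q *ᵥ Pi.single 0 1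
  set w := P' *ᵥ Pi.single 0 1
  have hMv : M *ᵥ v = (T a : ℂ[T;T⁻¹]) • w := by
    have : P' *ᵥ ((P * M * Q) *ᵥ Pi.single 0 1) = M *ᵥ v := by
      rw [mulVec_mulVec, ← Matrix.mul_assoc, ← Matrix.mul_assoc, hP'P, Matrix.one_mul,
        ← mulVec_mulVec]
    have hs : (Pi.single 0 (T a) : Fin (q + 1) → ℂ[T;T⁻¹]) =
        (T a : ℂ[T;T⁻¹]) • Pi.single 0 1 := by
      rw [← Pi.single_smul', smul_eq_mul, mul_one]
    rw [← this, ha, hs, mulVec_smul]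
  have hv : v ≠ 0 := fun h0 => by
    have := congrArg (Q' *ᵥ ·) h0
    simp only [v, mulVec_mulVec, hQ'Q, one_mulVec, mulVec_zero] at this
    simpa using congrFun this 0
  have hMv0 : M *ᵥ v ≠ 0 := fun h0 => hv <| by
    simpa [mulVec_mulVec, nonsing_inv_mul _ hM] using congrArg (M⁻¹ *ᵥ ·) h0
  obtain ⟨i, hi⟩ := Function.ne_iff.1 hMv0
  have hwi : w i ≠ 0 := fun h0 => hi (by simp [hMv, h0])
  have hanti : T (a - Δ) * w i ∈ antiPolySubring := by
    rw [sub_eq_neg_add, T_add, mul_assoc, ← smul_eq_mul (T a), ← Pi.smul_apply, ← hMv, mulVec,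
      dotProduct, Finset.mul_sum]
    refine sum_mem fun k _ => ?_
    rw [← mul_assoc]
    exact mul_mem (hΔ i k) (by simpa [v] using hQ.1 k 0)
  have := nonpos_of_T_mul_mem_antiPolySubring (by simpa [w] using hP'.1 i 0) hwi hanti
  omega

theorem HasPivot.exists_bundleEquiv_bordered
    (ih : ∀ B : Matrix (Fin q) (Fin q) ℂ[T;T⁻¹], IsUnit B.det →
      ∃ b : Fin q → ℤ, BundleEquiv B (diagonal fun i => T (b i)))
    {N : Matrix (Fin (q + 1)) (Fin (q + 1)) ℂ[T;T⁻¹]} {a : ℤ} (ha : HasPivot N a)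
    (hN : IsUnit N.det) : ∃ (c : Fin q → ℂ[T;T⁻¹]) (b : Fin q → ℤ),
      BundleEquiv N (bordered (T a) c (diagonal fun i => T (b i))) := by
  rw [eq_bordered_of_mulVec_single ha] at hN ⊢
  rw [det_bordered] at hN
  obtain ⟨b, hb⟩ := ih _ (isUnit_of_mul_isUnit_right hN)
  obtain ⟨P, Q, hP, hQ, hPQ⟩ := bundleEquiv_iff.1 hb
  refine ⟨(fun j => N 0 j.succ) ᵥ* Q, b, ?_⟩
  convert BundleEquiv.gauge_mul_mul (isGauge_bordered (c := 0) (fun _ => zero_mem _) hP)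
    (isGauge_bordered (c := 0) (fun _ => zero_mem _) hQ) using 1
  rw [hPQ, bordered_mul_bordered, bordered_mul_bordered, one_mul, mul_one, one_smul, smul_zero,
    zero_vecMul, add_zero, zero_add]

theorem exists_bundleEquiv_bordered_reduced (a : ℤ) (c : Fin q → ℂ[T;T⁻¹]) (b : Fin q → ℤ) :
    ∃ γ, BundleEquiv (bordered (T a) c (diagonal fun i => T (b i)))
        (bordered (T a) γ (diagonal fun i => T (b i))) ∧
      ∀ m i, (γ m).coeff i ≠ 0 → a < i ∧ i < b m := by
  choose α hα β hβ γ hc hγ using fun m => exists_eq_T_mul_add_add_T_mul (c m) a (b m)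
  refine ⟨γ, ?_, hγ⟩
  convert BundleEquiv.gauge_mul_mul
    (isGauge_bordered (c := -β) (fun m => neg_mem (hβ m)) IsGauge.one)
    (isGauge_bordered (c := -α) (fun m => neg_mem (hα m)) IsGauge.one) using 1
  rw [bordered_mul_bordered, bordered_mul_bordered]
  congr 1
  · simp
  · ext m
    simp [vecMul_diagonal, hc m]
  · simp

theorem exists_bundleEquiv_hasPivot_gt {a : ℤ} {γ : Fin q → ℂ[T;T⁻¹]} {b : Fin q → ℤ}
    (hγ : ∀ m i, (γ m).coeff i ≠ 0 → a < i ∧ i < b m) (hγ0 : γ ≠ 0) :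
    ∃ N j, BundleEquiv (bordered (T a) γ (diagonal fun i => T (b i))) N ∧ HasPivot N j ∧ a < j := by
  obtain ⟨m, hm⟩ := Function.ne_iff.1 hγ0
  obtain ⟨j, hj, u, hu, hu0, hγu⟩ := exists_eq_mul_T_of_ne_zero hm
  obtain ⟨haj, hjb⟩ := hγ m j hj
  obtain ⟨e, he⟩ : ∃ e : ℕ, (e : ℤ) = b m - j := ⟨(b m - j).toNat, by omega⟩
  obtain ⟨x, hx, y, hy, hxy⟩ := exists_bezout_T hu hu0 e
  obtain ⟨G, hG, hGv⟩ := exists_isGauge_mulVec_single_add_single (Fin.succ_ne_zero m).symm hu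
    (T_mem_polySubring (Int.natCast_nonneg e)) hx hy hxy (T j)
  refine ⟨G * bordered (T a) γ (diagonal fun i => T (b i)) *
    (Equiv.swap 0 m.succ).toPEquiv.toMatrix, j,
    BundleEquiv.gauge_mul_mul hG (isGauge_permMatrix _), ?_, haj⟩
  rw [HasPivot, ← mulVec_mulVec, ← mulVec_mulVec, Equiv.swap_toMatrix_mulVec_single,
    bordered_diagonal_mulVec_single_succ, hγu, ← hGv, ← T_add, he, sub_add_cancel]

theorem exists_bundleEquiv_diagonal : ∀ {r : ℕ} {M : Matrix (Fin r) (Fin r) ℂ[T;T⁻¹]},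
    IsUnit M.det → ∃ a : Fin r → ℤ, BundleEquiv M (diagonal fun i => T (a i))
  | 0, M, _ => ⟨Fin.elim0, by convert BundleEquiv.refl M; ext i; exact i.elim0⟩
  | _ + 1, M, hM => by
    obtain ⟨Δ, hΔ⟩ := M.exists_T_mul_apply_mem_antiPolySubring
    obtain ⟨a, ⟨N, hMN, hN⟩, hmax⟩ :=
      Int.exists_greatest_of_bdd (P := fun a => ∃ N, BundleEquiv M N ∧ HasPivot N a)
        ⟨Δ, fun a ⟨N, hMN, hN⟩ => hN.le_of_bundleEquiv hMN hM hΔ⟩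
        (by obtain ⟨N, a, h⟩ := exists_bundleEquiv_hasPivot hM; exact ⟨a, N, h⟩)
    obtain ⟨c, b, hc⟩ := hN.exists_bundleEquiv_bordered
      (fun B hB => exists_bundleEquiv_diagonal hB) (hMN.isUnit_det hM)
    obtain ⟨γ, hγ, hγa⟩ := exists_bundleEquiv_bordered_reduced a c b
    have hMγ := (hMN.trans hc).trans hγ
    by_cases hγ0 : γ = 0
    · refine ⟨Fin.cons a b, ?_⟩
      rw [hγ0, bordered_zero_diagonal] at hMγ
      convert hMγ using 3 with i
      cases i using Fin.cases <;> simp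
    · obtain ⟨N', j, hN', hN'j, haj⟩ := exists_bundleEquiv_hasPivot_gt hγa hγ0
      exact absurd (hmax j ⟨N', hMγ.trans hN', hN'j⟩) (not_le.2 haj)

end Existence

section Uniqueness

theorem Matrix.card_le_card_of_mul_eq_one {R : Type*} [CommRing R] [Nontrivial R]
    {m n : Type*} [Fintype m] [Fintype n] [DecidableEq n] {X : Matrix m n R}
    {Y : Matrix n m R} (h : Y * X = 1) : Fintype.card n ≤ Fintype.card m :=
  card_le_of_injective R X.mulVecLin fun v w hvw => by
    simpa [mulVec_mulVec, h] using congrArg (Y *ᵥ ·) hvw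

theorem Multiset.eq_of_forall_card_filter_le_eq {s t : Multiset ℤ}
    (h : ∀ c, card (s.filter (c ≤ ·)) = card (t.filter (c ≤ ·))) : s = t := by
  have key (u : Multiset ℤ) (c : ℤ) :
      card (u.filter (c ≤ ·)) = u.count c + card (u.filter (c < ·)) := by
    induction u using Multiset.induction_on with
    | empty => simp
    | cons x u ih =>
      simp only [Multiset.filter_cons, Multiset.count_cons]
      split_ifs <;> simp <;> omega
  ext c
  have := key s c
  have := key t c
  have := h c
  have := h (c + 1)
  simp only [Int.add_one_le_iff] at this
  omega

theorem le_of_diagonal_mul_eq_mul_diagonal {r : ℕ} {a b : Fin r → ℤ}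
    {P Q : Matrix (Fin r) (Fin r) ℂ[T;T⁻¹]} (hP : ∀ i j, P i j ∈ polySubring)
    (hQ : ∀ i j, Q i j ∈ antiPolySubring)
    (h : (diagonal fun i => T (b i)) * Q = P * diagonal fun i => T (a i)) {i j : Fin r}
    (hij : P i j ≠ 0) : a j ≤ b i := by
  have hentry := congrFun₂ h i j
  rw [diagonal_mul, mul_diagonal] at hentry
  have hQij : T (a j - b i) * P i j = Q i j := by
    calc T (a j - b i) * P i j = T (-b i) * (P i j * T (a j)) := by
          rw [sub_eq_add_neg, T_add]
          ring
      _ = Q i j := by rw [← hentry, ← mul_assoc, ← T_add, neg_add_cancel, T_zero, one_mul]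
  have := nonpos_of_T_mul_mem_antiPolySubring (hP i j) hij (hQij ▸ hQ i j)
  omega

theorem card_filter_le_of_bundleEquiv_diagonal {r : ℕ} {a b : Fin r → ℤ}
    (h : BundleEquiv (diagonal fun i => T (a i)) (diagonal fun i => T (b i))) (c : ℤ) :
    (Finset.univ.filter (c ≤ a ·)).card ≤ (Finset.univ.filter (c ≤ b ·)).card := by
  obtain ⟨P, Q, hP, hQ, hPQ⟩ := bundleEquiv_iff.1 h
  obtain ⟨P', -, -, hP'P⟩ := hP.exists_inv
  obtain ⟨Q', hQ', hQQ', -⟩ := hQ.exists_inv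
  have hPa {i j} : P i j ≠ 0 → a j ≤ b i := le_of_diagonal_mul_eq_mul_diagonal hP.1 hQ'.1
    (by rw [hPQ, Matrix.mul_assoc, hQQ', Matrix.mul_one])
  let I := {i // c ≤ b i}
  let J := {j // c ≤ a j}
  have hYX : P'.submatrix (Subtype.val : J → Fin r) (Subtype.val : I → Fin r) *
      P.submatrix (Subtype.val : I → Fin r) (Subtype.val : J → Fin r) = 1 := by
    refine Matrix.ext fun j j' => ?_
    have hsum : ∑ i : I, P' j i * P i j' = ∑ i, P' j i * P i j' := by
      rw [← Finset.sum_subtype (Finset.univ.filter (c ≤ b ·)) (p := (c ≤ b ·)) (by simp)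
        fun i => P' j i * P i j']
      refine Finset.sum_subset (Finset.filter_subset _ _) fun i _ hi => ?_
      have : P i j' = 0 := by
        by_contra h0
        exact hi (Finset.mem_filter.2 ⟨Finset.mem_univ _, j'.2.trans (hPa h0)⟩)
      rw [this, mul_zero]
    rw [mul_apply]
    simp only [submatrix_apply]
    rw [hsum, ← mul_apply, hP'P]
    simp [one_apply, Subtype.ext_iff]
  simpa [Fintype.card_subtype] using Matrix.card_le_card_of_mul_eq_one hYX

end Uniqueness

theorem grothendieck_splitting (r : ℕ)
    (A : Matrix (Fin r) (Fin r) (LaurentPolynomial ℂ)) (hA : IsUnit A.det) :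
    (∃ a : Fin r → ℤ, BundleEquiv A (Matrix.diagonal fun i => T (a i))) ∧
    (∀ a b : Fin r → ℤ,
      BundleEquiv A (Matrix.diagonal fun i => T (a i)) →
      BundleEquiv A (Matrix.diagonal fun i => T (b i)) →
      Finset.univ.val.map a = Finset.univ.val.map b) := by
  refine ⟨exists_bundleEquiv_diagonal hA, fun a b ha hb => ?_⟩
  have hab := ha.symm.trans hb
  refine Multiset.eq_of_forall_card_filter_le_eq fun c => ?_
  simp only [Multiset.filter_map, Multiset.card_map]
  exact le_antisymm (card_filter_le_of_bundleEquiv_diagonal hab c)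
    (card_filter_le_of_bundleEquiv_diagonal hab.symm c)
end
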